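/- arXiv:2109.12189 — 11 statements merged into one kernel-verified Lean document; each statement's English description precedes it below -/
import Mathlib

section
/- Let G be a group and H_1,...,H_N subgroups of G. If a left coset of a subgroup H of G is contained in a finite union of left cosets of the H_i, then H is contained in a finite union of cosets of those H_i having finite index intersection with H; more precisely (B.H. Neumann's lemma): if G is covered by finitely many left cosets g_1H_1, ..., g_NH_N, then some H_i has finite index in G. -/
open Pointwise
/-- B.H. Neumann's lemma on coverings of groups by cosets: if a left coset of a
subgroup `K` is covered by finitely many left cosets of subgroups `H i`, then `K` is
covered by finitely many left cosets of those `H i` whose intersection with `K` has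
finite index in `K`; and if `G` itself is covered by the left cosets `g i • H i`,
then some `H i` has finite index in `G`. -/
theorem neumann_coset_cover {G : Type*} [Group G] {N : ℕ}
    (H : Fin N → Subgroup G) (g : Fin N → G) (K : Subgroup G) (g₀ : G)
    (hcover : g₀ • (K : Set G) ⊆ ⋃ i, g i • (H i : Set G)) :
    (∃ s : Finset (G × Fin N),
      (∀ p ∈ s, ((H p.2).subgroupOf K).FiniteIndex) ∧
      (K : Set G) ⊆ ⋃ p ∈ s, p.1 • (H p.2 : Set G)) ∧
    ((⋃ i, g i • (H i : Set G)) = Set.univ → ∃ i, (H i).FiniteIndex) := by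
  classical
  constructor
  · -- transfer to a cover of the group `K`
    set P : Fin N → Prop := fun i => ∃ k : K, (k : G) ∈ (g₀⁻¹ * g i) • (H i : Set G) with hP
    set c : Fin N → K := fun i => if h : P i then h.choose else 1 with hc
    have hmem : ∀ k : K, ∃ i, (k : G) ∈ (g₀⁻¹ * g i) • (H i : Set G) := by
      intro k
      have : g₀ * k ∈ ⋃ i, g i • (H i : Set G) :=
        hcover ⟨k, k.2, rfl⟩
      obtain ⟨i, hi⟩ := Set.mem_iUnion.mp this
      refine ⟨i, ?_⟩
      rw [mem_leftCoset_iff] at hi ⊢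
      simpa [mul_assoc] using hi
    set s : Finset (Fin N) := Finset.univ.filter P with hs
    have hKcov : ⋃ i ∈ s, c i • (((H i).subgroupOf K : Subgroup K) : Set K) = Set.univ := by
      apply Set.eq_univ_of_forall
      intro k
      obtain ⟨i, hi⟩ := hmem k
      have hPi : P i := ⟨k, hi⟩
      have hci : (c i : G) ∈ (g₀⁻¹ * g i) • (H i : Set G) := by
        rw [hc]; simp only [hPi, dif_pos]; exact hPi.choose_spec
      apply Set.mem_iUnion₂.mpr
      refine ⟨i, by simp [hs, hPi], ?_⟩
      rw [mem_leftCoset_iff]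
      rw [mem_leftCoset_iff] at hi hci
      show (↑((c i)⁻¹ * k) : G) ∈ H i
      have : ((c i : G))⁻¹ * k = ((g₀⁻¹ * g i)⁻¹ * (c i : G))⁻¹ * ((g₀⁻¹ * g i)⁻¹ * k) := by
        group
      rw [Subgroup.coe_mul, Subgroup.coe_inv, this]
      exact (H i).mul_mem ((H i).inv_mem hci) hi
    have hfin := Subgroup.leftCoset_cover_filter_FiniteIndex (G := K)
      (H := fun i => (H i).subgroupOf K) (g := c) (s := s) hKcov
    refine ⟨(s.filter (fun i => ((H i).subgroupOf K).FiniteIndex)).image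
      (fun i => ((c i : G), i)), ?_, ?_⟩
    · rintro p hp
      simp only [Finset.mem_image, Finset.mem_filter] at hp
      obtain ⟨i, ⟨-, hfi⟩, rfl⟩ := hp
      exact hfi
    · intro x hx
      have : (⟨x, hx⟩ : K) ∈ ⋃ i ∈ s.filter (fun i => ((H i).subgroupOf K).FiniteIndex),
          c i • (((H i).subgroupOf K : Subgroup K) : Set K) := hfin ▸ Set.mem_univ _
      obtain ⟨i, hi, hxi⟩ := Set.mem_iUnion₂.mp this
      refine Set.mem_biUnion (Finset.mem_image_of_mem _ hi) ?_
      rw [mem_leftCoset_iff] at hxi ⊢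
      exact hxi
  · intro hG
    have hG' : ⋃ i ∈ (Finset.univ : Finset (Fin N)), g i • (H i : Set G) = Set.univ := by
      simpa using hG
    obtain ⟨i, -, hfi⟩ := Subgroup.exists_finiteIndex_of_leftCoset_cover hG'
    exact ⟨i, hfi⟩
end

section
/- The left cosets of finitely many subgroups H_1,...,H_N of a group G form a pre-basis of closed sets for a noetherian topology on G: there is no infinite strictly descending chain of finite unions of left cosets of intersections H_I = ⋂_{i∈I} H_i. -/
/-!
A nonempty intersection `x • K ∩ y • L` of left cosets is the left coset `z • (K ⊓ L)` of any of
its points, so finite unions of cosets of an inf-closed family `𝒦` of subgroups are closed under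
finite intersections. Hence a proper such subset of a coset `x • K` is a finite union of cosets
of members of `𝒦` strictly below `K`. When `<` is well founded on `𝒦`, induction on `K` gives
the descending chain condition inside every coset: a chain in `x • K` that is not eventually
`x • K` eventually lies in finitely many cosets of smaller subgroups, and a chain inside a
finite union `A ∪ B` stabilizes because its traces on `A` and on `B` do. The subgroups `⨅ i ∈ I, H i` form a finite inf-closed family.
-/

open Pointwise Filter

section

variable {G : Type*} [Group G]

theorem leftCoset_eq_of_mem {K : Subgroup G} {x z : G} (hz : z ∈ x • (K : Set G)) :
    z • (K : Set G) = x • (K : Set G) :=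
  (leftCoset_eq_iff K).2 (by simpa using K.inv_mem ((mem_leftCoset_iff x).1 hz))

theorem leftCoset_inter_leftCoset_of_mem {K L : Subgroup G} {x y z : G}
    (hz : z ∈ x • (K : Set G) ∩ y • (L : Set G)) :
    x • (K : Set G) ∩ y • (L : Set G) = z • ((K ⊓ L : Subgroup G) : Set G) := by
  rw [← leftCoset_eq_of_mem hz.1, ← leftCoset_eq_of_mem hz.2, ← Set.smul_set_inter,
    Subgroup.coe_inf]

inductive IsCosetUnion (𝒦 : Set (Subgroup G)) : Set G → Prop
  | empty : IsCosetUnion 𝒦 ∅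
  | leftCoset_union {K : Subgroup G} (hK : K ∈ 𝒦) (x : G) {F : Set G} :
      IsCosetUnion 𝒦 F → IsCosetUnion 𝒦 (x • (K : Set G) ∪ F)

variable {𝒦 𝒦' : Set (Subgroup G)} {F F' : Set G}

namespace IsCosetUnion

theorem mono (h : 𝒦 ⊆ 𝒦') (hF : IsCosetUnion 𝒦 F) : IsCosetUnion 𝒦' F := by
  induction hF with
  | empty => exact empty
  | leftCoset_union hK x _ ih => exact leftCoset_union (h hK) x ih

theorem leftCoset {K : Subgroup G} (hK : K ∈ 𝒦) (x : G) : IsCosetUnion 𝒦 (x • (K : Set G)) := by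
  simpa using leftCoset_union hK x empty

theorem union (hF : IsCosetUnion 𝒦 F) (hF' : IsCosetUnion 𝒦 F') : IsCosetUnion 𝒦 (F ∪ F') := by
  induction hF with
  | empty => simpa using hF'
  | leftCoset_union hK x _ ih => simpa [Set.union_assoc] using leftCoset_union hK x ih

theorem biUnion {ι : Type*} (s : Finset ι) (x : ι → G) (K : ι → Subgroup G)
    (hK : ∀ i ∈ s, K i ∈ 𝒦) : IsCosetUnion 𝒦 (⋃ i ∈ s, x i • (K i : Set G)) := by
  classical
  induction s using Finset.induction_on with
  | empty => simpa using empty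
  | insert i s _ ih =>
    rw [Finset.set_biUnion_insert]
    exact leftCoset_union (hK i (s.mem_insert_self i)) (x i)
      (ih fun j hj => hK j (Finset.mem_insert_of_mem hj))

theorem inter_leftCoset (h𝒦 : InfClosed 𝒦) (hF : IsCosetUnion 𝒦 F) {L : Subgroup G}
    (hL : L ∈ 𝒦) (y : G) : IsCosetUnion 𝒦 (F ∩ y • (L : Set G)) := by
  induction hF with
  | empty => simpa using empty
  | @leftCoset_union K hK x F _ ih =>
    rw [Set.union_inter_distrib_right]
    refine union ?_ ih
    obtain hempty | ⟨z, hz⟩ := (x • (K : Set G) ∩ y • (L : Set G)).eq_empty_or_nonempty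
    · simpa [hempty] using empty
    · rw [leftCoset_inter_leftCoset_of_mem hz]
      exact leftCoset (h𝒦 hK hL) z

theorem inter (h𝒦 : InfClosed 𝒦) (hF : IsCosetUnion 𝒦 F) (hF' : IsCosetUnion 𝒦 F') :
    IsCosetUnion 𝒦 (F ∩ F') := by
  induction hF' with
  | empty => simpa using empty
  | leftCoset_union hK x _ ih =>
    rw [Set.inter_union_distrib_left]
    exact union (inter_leftCoset h𝒦 hF hK x) ih

theorem leftCoset_subset_or_inter_lt (h𝒦 : InfClosed 𝒦) (hF : IsCosetUnion 𝒦 F)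
    {K : Subgroup G} (hK : K ∈ 𝒦) (x : G) :
    x • (K : Set G) ⊆ F ∨ IsCosetUnion {L ∈ 𝒦 | L < K} (F ∩ x • (K : Set G)) := by
  induction hF with
  | empty => simpa using Or.inr empty
  | @leftCoset_union L hL y F _ ih =>
    rw [Set.union_inter_distrib_right]
    obtain hsub | ih := ih
    · exact Or.inl (hsub.trans Set.subset_union_right)
    obtain hempty | ⟨z, hz⟩ := (y • (L : Set G) ∩ x • (K : Set G)).eq_empty_or_nonempty
    · simpa [hempty] using Or.inr ih
    have hinter := leftCoset_inter_leftCoset_of_mem hz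
    by_cases hlt : L ⊓ K < K
    · rw [hinter]
      exact Or.inr (union (leftCoset (𝒦 := {L ∈ 𝒦 | L < K}) ⟨h𝒦 hL hK, hlt⟩ z) ih)
    · left
      rw [eq_of_le_of_not_lt inf_le_right hlt, leftCoset_eq_of_mem hz.2] at hinter
      exact (hinter.symm.subset.trans Set.inter_subset_left).trans Set.subset_union_left

end IsCosetUnion

def CosetDCCOn (𝒦 : Set (Subgroup G)) (A : Set G) : Prop :=
  ∀ f : ℕ → Set G, Antitone f → (∀ n, IsCosetUnion 𝒦 (f n)) → (∀ᶠ n in atTop, f n ⊆ A) →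
    EventuallyConst f atTop

namespace CosetDCCOn

theorem empty : CosetDCCOn 𝒦 ∅ := fun _ _ _ hsub =>
  eventuallyConst_iff_exists_eventuallyEq.2 ⟨∅, hsub.mono fun _ => Set.subset_empty_iff.1⟩

theorem union (h𝒦 : InfClosed 𝒦) {A B : Set G} (hA : IsCosetUnion 𝒦 A)
    (hB : IsCosetUnion 𝒦 B) (hA' : CosetDCCOn 𝒦 A) (hB' : CosetDCCOn 𝒦 B) :
    CosetDCCOn 𝒦 (A ∪ B) := by
  intro f hf hcl hsub
  have hfA := hA' (f · ∩ A) (fun _ _ h => Set.inter_subset_inter_left A (hf h))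
    (fun n => (hcl n).inter h𝒦 hA) (.of_forall fun _ => Set.inter_subset_right)
  have hfB := hB' (f · ∩ B) (fun _ _ h => Set.inter_subset_inter_left B (hf h))
    (fun n => (hcl n).inter h𝒦 hB) (.of_forall fun _ => Set.inter_subset_right)
  refine (hfA.comp₂ (· ∪ ·) hfB).congr (hsub.mono fun n hn => ?_)
  change f n ∩ A ∪ f n ∩ B = f n
  rw [← Set.inter_union_distrib_left, Set.inter_eq_left.2 hn]

end CosetDCCOn

theorem IsCosetUnion.cosetDCCOn (h𝒦 : InfClosed 𝒦) (h𝒦' : 𝒦' ⊆ 𝒦)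
    (hcoset : ∀ K ∈ 𝒦', ∀ x : G, CosetDCCOn 𝒦 (x • (K : Set G))) (hF : IsCosetUnion 𝒦' F) :
    CosetDCCOn 𝒦 F := by
  induction hF with
  | empty => exact .empty
  | leftCoset_union hK x hF ih =>
    exact .union h𝒦 (.leftCoset (h𝒦' hK) x) (hF.mono h𝒦') (hcoset _ hK x) ih

theorem cosetDCCOn_leftCoset (h𝒦 : InfClosed 𝒦) (hwf : 𝒦.WellFoundedOn (· < ·))
    {K : Subgroup G} (hK : K ∈ 𝒦) :
    ∀ x : G, CosetDCCOn 𝒦 (x • (K : Set G)) := by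
  refine hwf.induction hK (P := fun K => ∀ x : G, CosetDCCOn 𝒦 (x • (K : Set G)))
    fun K hK ih x => ?_
  intro f hf hcl hsub
  by_cases hall : ∀ᶠ n in atTop, f n = x • (K : Set G)
  · exact eventuallyConst_iff_exists_eventuallyEq.2 ⟨_, hall⟩
  obtain ⟨n, hn_sub, hne⟩ := (hsub.and_frequently (not_eventually.1 hall)).exists
  have hfn : CosetDCCOn 𝒦 (f n) := by
    obtain hsup | hlt := (hcl n).leftCoset_subset_or_inter_lt h𝒦 hK x
    · exact absurd (hn_sub.antisymm hsup) hne
    rw [Set.inter_eq_left.2 hn_sub] at hlt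
    exact hlt.cosetDCCOn h𝒦 (fun _ hL => hL.1) fun L hL y => ih L hL.1 hL.2 y
  exact hfn f hf hcl ((eventually_ge_atTop n).mono fun _ hm => hf hm)

theorem IsCosetUnion.eventuallyConst_of_antitone (h𝒦 : InfClosed 𝒦)
    (hwf : 𝒦.WellFoundedOn (· < ·)) {f : ℕ → Set G} (hf : Antitone f) (hcl : ∀ n, IsCosetUnion 𝒦 (f n)) : EventuallyConst f atTop :=
  (hcl 0).cosetDCCOn h𝒦 subset_rfl (fun _ hK x => cosetDCCOn_leftCoset h𝒦 hwf hK x) f hf hcl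
    (.of_forall fun n => hf n.zero_le)

end

/-- The left cosets of finitely many subgroups `H 1, ..., H N` of a group `G` form a
pre-basis of closed sets for a noetherian topology on `G`: there is no infinite
strictly descending chain of finite unions of left cosets of the intersections
`H_I = ⋂ i ∈ I, H i`. -/
theorem noetherian_coset_topology {G : Type*} [Group G] {N : ℕ} (H : Fin N → Subgroup G) :
    ¬ ∃ f : ℕ → Set G,
      (∀ k : ℕ, ∃ s : Finset (G × Finset (Fin N)),
        f k = ⋃ p ∈ s, p.1 • ((⨅ i ∈ p.2, H i : Subgroup G) : Set G)) ∧
      (∀ k : ℕ, f (k + 1) ⊂ f k) := by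
  rintro ⟨f, hrep, hdesc⟩
  set 𝒦 := Set.range fun I : Finset (Fin N) => ⨅ i ∈ I, H i
  have h𝒦 : InfClosed 𝒦 := by
    rintro _ ⟨I, rfl⟩ _ ⟨J, rfl⟩
    exact ⟨I ∪ J, Finset.iInf_union⟩
  have hcl : ∀ k, IsCosetUnion 𝒦 (f k) := fun k => by
    obtain ⟨s, hs⟩ := hrep k
    exact hs ▸ IsCosetUnion.biUnion s Prod.fst _ fun p _ => ⟨p.2, rfl⟩
  obtain ⟨n, hn⟩ := eventuallyConst_atTop_nat.1 <| IsCosetUnion.eventuallyConst_of_antitone h𝒦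
    (Set.finite_range _).wellFoundedOn (antitone_nat_of_succ_le fun k => (hdesc k).subset) hcl
  exact (hdesc n).ne (hn n le_rfl)
end

section
/- A nonzero definably complete ordered abelian group is regular; in particular, a nonzero ordered abelian group Γ ⊆ ℝ that is definably complete and dense but not divisible cannot exist: if Γ ≤ (ℝ,+,<) is dense in ℝ and definably complete, then Γ is divisible. -/
/-- A nonzero definably complete ordered abelian group is regular; concretely:
if `Γ ≤ (ℝ, +, <)` is a nonzero dense subgroup such that every set of the form
`{γ ∈ Γ : n·γ ≤ c}` (for `n ∈ ℤ_{>0}`, `c ∈ Γ`) has a supremum in `Γ`, then `Γ` is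
divisible. -/
theorem divisible_of_definably_complete (Γ : AddSubgroup ℝ)
    (hne : ∃ x ∈ Γ, x ≠ 0)
    (hdense : Dense (Γ : Set ℝ))
    (hcomplete : ∀ n : ℕ, 0 < n → ∀ c ∈ Γ,
      ∃ s ∈ Γ, IsLUB {x : ℝ | x ∈ Γ ∧ (n : ℝ) * x ≤ c} s) :
    ∀ x ∈ Γ, ∀ n : ℕ, 0 < n → ∃ y ∈ Γ, (n : ℝ) * y = x := by
  intro x hx n hn
  obtain ⟨s, hsΓ, hs⟩ := hcomplete n hn x hx
  have hn' : (0:ℝ) < n := by exact_mod_cast hn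
  have hlub : IsLUB {y : ℝ | y ∈ Γ ∧ (n:ℝ) * y ≤ x} (x / n) := by
    constructor
    · rintro y ⟨hy, hyx⟩
      rw [le_div_iff₀ hn']
      linarith
    · intro b hb
      by_contra hlt
      push_neg at hlt
      obtain ⟨γ, hγΓ, hγmem⟩ := hdense.exists_mem_open isOpen_Ioo
        (Set.nonempty_Ioo.2 hlt)
      have h1 : (n:ℝ) * γ ≤ x := by
        have := (lt_div_iff₀ hn').1 hγmem.2
        linarith
      have := hb ⟨hγΓ, h1⟩
      linarith [hγmem.1]
  have hse : s = x / n := hs.unique hlub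
  exact ⟨s, hsΓ, by rw [hse]; field_simp⟩
end

section
/- Let (K, v) be a valued field, L, K' valued field extensions of K inside a common valued field U, with L/K a separated extension. If v(L) ∩ v(K') = v(K) and the residue fields res(L) and res(K') are linearly disjoint over res(K), then any tuple (b_1,...,b_n) from L that is valuation independent over K remains valuation independent over K'. In particular, L and K' are linearly disjoint over K. -/
/-!
Given coefficients `aⱼ ∈ K'`, only the indices `j` where `v (aⱼ bⱼ)` is maximal matter. For
those, `v (bⱼ / b_{i₀}) = v (a_{i₀} / aⱼ)` lies in `v(L) ∩ v(K') = v(K)`, so rescaling by elements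
of `K` turns `(bⱼ / b_{i₀})` into a tuple of units `xⱼ`. Valuation independence of `b` over `K`
says that the residues of the `xⱼ` are independent over `res K`, hence over `res K'`, so the
leading terms of `∑ aⱼ bⱼ` cannot cancel.

For linear disjointness, separatedness replaces a `K`-independent tuple from `L` by a valuation
basis `c` of its `K`-span; `c` stays valuation independent, hence independent, over `K'`, and
`b` spans the same `K'`-space with the same number of vectors.
-/

/-- `b` is valuation independent over the subfield `F` (multiplicative convention:
`v (∑ aᵢ bᵢ)` equals the *maximum* of the `v (aᵢ bᵢ)`; since `v (∑ aᵢ bᵢ) ≤ max` is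
automatic for a valuation, this is expressed as `∀ i, v (aᵢ bᵢ) ≤ v (∑ aᵢ bᵢ)`). -/
def ValIndep {U Γ₀ : Type*} [Field U] [LinearOrderedCommGroupWithZero Γ₀]
    (v : Valuation U Γ₀) (F : Subfield U) {n : ℕ} (b : Fin n → U) : Prop :=
  ∀ a : Fin n → U, (∀ i, a i ∈ F) → ∀ i, v (a i * b i) ≤ v (∑ j, a j * b j)

/-- `b` is linearly independent over the subfield `F`. -/
def LinIndepOver {U : Type*} [Field U] (F : Subfield U) {n : ℕ} (b : Fin n → U) : Prop :=
  ∀ a : Fin n → U, (∀ i, a i ∈ F) → (∑ i, a i * b i) = 0 → ∀ i, a i = 0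

/-- `x` lies in the `F`-linear span of the tuple `c`. -/
def InSpan {U : Type*} [Field U] (F : Subfield U) {n : ℕ} (c : Fin n → U) (x : U) : Prop :=
  ∃ a : Fin n → U, (∀ i, a i ∈ F) ∧ x = ∑ i, a i * c i

/-- The residues of the tuple `x` (of elements of the valuation ring) are linearly
independent over the residue field of the subfield `F`. -/
def ResIndep {U Γ₀ : Type*} [Field U] [LinearOrderedCommGroupWithZero Γ₀]
    (v : Valuation U Γ₀) (F : Subfield U) {n : ℕ} (x : Fin n → U) : Prop :=
  ∀ a : Fin n → U, (∀ i, a i ∈ F) → (∀ i, v (a i) ≤ 1) →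
    v (∑ i, a i * x i) < 1 → ∀ i, v (a i) < 1

section ValIndep

variable {U Γ₀ : Type*} [Field U] [LinearOrderedCommGroupWithZero Γ₀] {v : Valuation U Γ₀}
  {F : Subfield U}

theorem ValIndep.const_mul {n : ℕ} {b : Fin n → U} (hb : ValIndep v F b) (c : U) :
    ValIndep v F (fun i => c * b i) := by
  intro a ha i
  have hsum : ∑ j, a j * (c * b j) = c * ∑ j, a j * b j := by
    rw [Finset.mul_sum]; exact Finset.sum_congr rfl fun j _ => by ring
  rw [hsum, mul_left_comm, map_mul v c, map_mul v c]
  exact mul_le_mul_right (hb a ha i) _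

theorem ValIndep.mul_of_mem {n : ℕ} {b t : Fin n → U} (hb : ValIndep v F b) (ht : ∀ i, t i ∈ F) :
    ValIndep v F (fun i => t i * b i) := by
  intro a ha i
  simp only [← mul_assoc]
  exact hb (fun j => a j * t j) (fun j => mul_mem (ha j) (ht j)) i

theorem ValIndep.comp_embedding {m n : ℕ} {b : Fin n → U} (hb : ValIndep v F b)
    (σ : Fin m ↪ Fin n) : ValIndep v F (b ∘ σ) := by
  classical
  intro a ha i
  set a' : Fin n → U := Function.extend σ a 0 with ha'_def
  have ha'σ : ∀ k, a' (σ k) = a k := σ.injective.extend_apply a 0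
  have ha' : ∀ j, a' j ∈ F := by
    intro j
    by_cases hj : ∃ k, σ k = j
    · obtain ⟨k, rfl⟩ := hj; rw [ha'σ]; exact ha k
    · rw [ha'_def, Function.extend_apply' _ _ _ hj]; exact zero_mem F
  have hsum : ∑ k, a k * b (σ k) = ∑ j, a' j * b j := by
    rw [← Finset.sum_subset (Finset.subset_univ (Finset.univ.map σ)), Finset.sum_map]
    · simp only [ha'σ]
    · intro j _ hj
      have : ¬∃ k, σ k = j := fun ⟨k, hk⟩ => hj (hk ▸ Finset.mem_map_of_mem σ (Finset.mem_univ k))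
      rw [ha'_def, Function.extend_apply' _ _ _ this, Pi.zero_apply, zero_mul]
  have := hb a' ha' (σ i)
  rwa [← hsum, ha'σ] at this

theorem resIndep_iff_valIndep {n : ℕ} {x : Fin n → U} (hx : ∀ i, v (x i) = 1) :
    ResIndep v F x ↔ ValIndep v F x := by
  constructor
  · intro h a ha i
    have : Nonempty (Fin n) := ⟨i⟩
    obtain ⟨i₀, hi₀⟩ := Finite.exists_max (fun j => v (a j))
    rcases eq_or_ne (a i₀) 0 with h0 | h0
    · have : v (a i) = 0 := le_antisymm (by simpa [h0] using hi₀ i) zero_le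
      simp [this]
    have hv0 : 0 < v (a i₀) := zero_lt_iff.2 ((Valuation.ne_zero_iff v).2 h0)
    -- normalise `a` so that its largest coefficient is `1`; its residue cannot vanish
    have hsum : 1 ≤ v (∑ j, a j / a i₀ * x j) := by
      by_contra hlt
      have := h (fun j => a j / a i₀) (fun j => div_mem (ha j) (ha i₀))
        (fun j => by rw [map_div₀]; exact div_le_one_of_le₀ (hi₀ j) zero_le)
        (not_le.1 hlt) i₀
      simp [div_self h0] at this
    have hsum' : ∑ j, a j / a i₀ * x j = (a i₀)⁻¹ * ∑ j, a j * x j := by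
      rw [Finset.mul_sum]; exact Finset.sum_congr rfl fun j _ => by ring
    rw [hsum', map_mul, map_inv₀, ← div_eq_inv_mul, le_div_iff₀ hv0, one_mul] at hsum
    rw [map_mul, hx, mul_one]
    exact (hi₀ i).trans hsum
  · intro h a ha _ hlt i
    simpa [hx] using (h a ha i).trans_lt hlt

end ValIndep

theorem Valuation.le_map_sum_of_le_map_sum_filter_eq {R Γ₀ ι : Type*} [Ring R]
    [LinearOrderedCommGroupWithZero Γ₀] (v : Valuation R Γ₀) [Fintype ι] (f : ι → R) {M : Γ₀}
    (hf : ∀ j, v (f j) ≤ M) (hM : M ≤ v (∑ j with v (f j) = M, f j)) :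
    M ≤ v (∑ j, f j) := by
  rcases eq_or_ne M 0 with rfl | hM0
  · exact zero_le
  have hrest : v (∑ j with ¬v (f j) = M, f j) < v (∑ j with v (f j) = M, f j) :=
    (v.map_sum_lt hM0 fun j hj => (hf j).lt_of_ne (Finset.mem_filter.1 hj).2).trans_le hM
  rwa [← Finset.sum_filter_add_sum_filter_not Finset.univ (fun j => v (f j) = M),
    v.map_add_eq_of_lt_left hrest]

section Transfer

variable {U Γ₀ : Type*} [Field U] [LinearOrderedCommGroupWithZero Γ₀] {v : Valuation U Γ₀}
  {K L K' : Subfield U}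

theorem exists_val_eq_mul_of_val_mul_eq
    (hval : ∀ x ∈ L, ∀ y ∈ K', x ≠ 0 → y ≠ 0 → v x = v y →
      ∃ z ∈ K, z ≠ (0 : U) ∧ v z = v x)
    {x y a a' : U} (hx : x ∈ L) (hy : y ∈ L) (ha : a ∈ K') (ha' : a' ∈ K')
    (hx0 : x ≠ 0) (hy0 : y ≠ 0) (ha0 : a ≠ 0) (ha'0 : a' ≠ 0) (h : v (a * x) = v (a' * y)) :
    ∃ z ∈ K, z ≠ 0 ∧ v x = v (z * y) := by
  have hvy : v y ≠ 0 := (Valuation.ne_zero_iff v).2 hy0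
  have hva : v a ≠ 0 := (Valuation.ne_zero_iff v).2 ha0
  have hv : v (x / y) = v (a' / a) := by
    rw [map_div₀, map_div₀, div_eq_div_iff hvy hva, mul_comm, ← map_mul, h, map_mul]
  obtain ⟨z, hzK, hz0, hz⟩ :=
    hval _ (div_mem hx hy) _ (div_mem ha' ha) (div_ne_zero hx0 hy0) (div_ne_zero ha'0 ha0) hv
  refine ⟨z, hzK, hz0, ?_⟩
  rw [map_mul, hz, map_div₀, div_mul_cancel₀ _ hvy]

theorem ValIndep.mono_of_val_eq_mul (hKL : K ≤ L) (hKK' : K ≤ K')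
    (hres : ∀ (n : ℕ) (x : Fin n → U), (∀ i, x i ∈ L) → (∀ i, v (x i) ≤ 1) →
      ResIndep v K x → ResIndep v K' x)
    {m : ℕ} {b : Fin m → U} (hb : ValIndep v K b) (hbL : ∀ j, b j ∈ L) {c : U} (hcL : c ∈ L)
    (hc : c ≠ 0) (hz : ∀ j, ∃ z ∈ K, z ≠ 0 ∧ v (b j) = v (z * c)) : ValIndep v K' b := by
  choose z hzK hz0 hbz using hz
  set x : Fin m → U := fun j => c⁻¹ * ((z j)⁻¹ * b j) with hx_def
  have hxL : ∀ j, x j ∈ L := fun j =>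
    mul_mem (inv_mem hcL) (mul_mem (inv_mem (hKL (hzK j))) (hbL j))
  have hx1 : ∀ j, v (x j) = 1 := by
    intro j
    rw [show x j = c⁻¹ * ((z j)⁻¹ * b j) from rfl, ← mul_assoc, ← mul_inv, map_mul, hbz,
      map_inv₀, mul_comm c, inv_mul_cancel₀ ((Valuation.ne_zero_iff v).2 (mul_ne_zero (hz0 j) hc))]
  have hxK : ValIndep v K x := (hb.mul_of_mem fun j => inv_mem (hzK j)).const_mul c⁻¹
  have hxK' : ValIndep v K' x := (resIndep_iff_valIndep hx1).1 <|
    hres m x hxL (fun j => (hx1 j).le) ((resIndep_iff_valIndep hx1).2 hxK)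
  have hbx : b = fun j => c * (z j * x j) := by
    funext j
    rw [hx_def]
    field_simp [hz0 j, hc]
  rw [hbx]
  exact (hxK'.mul_of_mem fun j => hKK' (hzK j)).const_mul c

theorem ValIndep.mono (hKL : K ≤ L) (hKK' : K ≤ K')
    (hval : ∀ x ∈ L, ∀ y ∈ K', x ≠ 0 → y ≠ 0 → v x = v y →
      ∃ z ∈ K, z ≠ (0 : U) ∧ v z = v x)
    (hres : ∀ (n : ℕ) (x : Fin n → U), (∀ i, x i ∈ L) → (∀ i, v (x i) ≤ 1) →
      ResIndep v K x → ResIndep v K' x)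
    {n : ℕ} {b : Fin n → U} (hb : ValIndep v K b) (hbL : ∀ i, b i ∈ L) : ValIndep v K' b := by
  intro a ha i
  have : Nonempty (Fin n) := ⟨i⟩
  obtain ⟨i₀, hi₀⟩ := Finite.exists_max fun j => v (a j * b j)
  set M := v (a i₀ * b i₀)
  rcases eq_or_ne M 0 with hM | hM
  · exact (hi₀ i).trans (hM ▸ zero_le)
  set I := Finset.univ.filter fun j => v (a j * b j) = M
  set σ := I.orderEmbOfFin rfl
  have hne : ∀ k, a (σ k) ≠ 0 ∧ b (σ k) ≠ 0 := fun k => by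
    have hk : v (a (σ k) * b (σ k)) = M := (Finset.mem_filter.1 (I.orderEmbOfFin_mem rfl k)).2
    simpa [← hk] using hM
  have hi₀I : i₀ ∈ Set.range σ := by
    rw [Finset.range_orderEmbOfFin]; exact Finset.mem_filter.2 ⟨Finset.mem_univ _, rfl⟩
  obtain ⟨k₀, hk₀⟩ := hi₀I
  obtain ⟨ha₀, hb₀⟩ : a i₀ ≠ 0 ∧ b i₀ ≠ 0 := hk₀ ▸ hne k₀
  have hlead : ValIndep v K' (b ∘ σ) :=
    (hb.comp_embedding σ.toEmbedding).mono_of_val_eq_mul hKL hKK' hres (fun k => hbL _)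
      (hbL i₀) hb₀ fun k =>
      exists_val_eq_mul_of_val_mul_eq hval (hbL _) (hbL i₀) (ha _) (ha i₀) (hne k).2 hb₀
        (hne k).1 ha₀ (Finset.mem_filter.1 (I.orderEmbOfFin_mem rfl k)).2
  have hsumI : ∑ j ∈ I, a j * b j = ∑ k, a (σ k) * b (σ k) := by
    have := Finset.sum_map Finset.univ σ.toEmbedding fun j => a j * b j
    rwa [I.map_orderEmbOfFin_univ rfl] at this
  refine (hi₀ i).trans (v.le_map_sum_of_le_map_sum_filter_eq _ hi₀ ?_)
  rw [hsumI]
  simpa only [Function.comp_apply, hk₀] using hlead (a ∘ σ) (fun k => ha _) k₀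

end Transfer

section LinIndepOver

variable {U : Type*} [Field U] {F : Subfield U} {n : ℕ}

theorem linIndepOver_iff_linearIndependent {b : Fin n → U} :
    LinIndepOver F b ↔ LinearIndependent F b := by
  rw [Fintype.linearIndependent_iff]
  constructor
  · exact fun h g hg i => Subtype.ext (h (fun i => g i) (fun i => (g i).2) hg i)
  · exact fun h a ha hsum i => congrArg Subtype.val (h (fun i => ⟨a i, ha i⟩) hsum i)

theorem inSpan_iff_mem_span {c : Fin n → U} {x : U} :
    InSpan F c x ↔ x ∈ Submodule.span F (Set.range c) := by
  rw [Submodule.mem_span_range_iff_exists_fun]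
  constructor
  · rintro ⟨a, ha, rfl⟩
    exact ⟨fun i => ⟨a i, ha i⟩, rfl⟩
  · rintro ⟨g, rfl⟩
    exact ⟨fun i => g i, fun i => (g i).2, rfl⟩

theorem InSpan.mono {F' : Subfield U} (hFF' : F ≤ F') {c : Fin n → U} {x : U}
    (h : InSpan F c x) : InSpan F' c x :=
  let ⟨a, ha, hx⟩ := h
  ⟨a, fun i => hFF' (ha i), hx⟩

theorem LinIndepOver.ne_zero {b : Fin n → U} (hb : LinIndepOver F b) (i : Fin n) : b i ≠ 0 :=
  (linIndepOver_iff_linearIndependent.1 hb).ne_zero i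

theorem LinIndepOver.of_forall_inSpan {b c : Fin n → U} (hc : LinIndepOver F c)
    (h : ∀ j, InSpan F b (c j)) : LinIndepOver F b := by
  rw [linIndepOver_iff_linearIndependent] at hc ⊢
  have hle : Submodule.span F (Set.range c) ≤ Submodule.span F (Set.range b) :=
    Submodule.span_le.2 (Set.range_subset_iff.2 fun j => inSpan_iff_mem_span.1 (h j))
  rw [linearIndependent_iff_card_eq_finrank_span]
  refine le_antisymm ?_ (finrank_range_le_card b)
  calc Fintype.card (Fin n) = Module.finrank F (Submodule.span F (Set.range c)) :=
        (finrank_span_eq_card hc).symm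
    _ ≤ Set.finrank F (Set.range b) :=
        have := Module.Finite.span_of_finite F (Set.finite_range b)
        Submodule.finrank_mono hle

theorem ValIndep.linIndepOver {Γ₀ : Type*} [LinearOrderedCommGroupWithZero Γ₀]
    {v : Valuation U Γ₀} {b : Fin n → U} (hb : ValIndep v F b) (hb0 : ∀ i, b i ≠ 0) :
    LinIndepOver F b := by
  intro a ha hsum i
  have := hb a ha i
  rw [hsum, map_zero, le_zero_iff, Valuation.zero_iff] at this
  exact (mul_eq_zero.1 this).resolve_right (hb0 i)

end LinIndepOver

/-- Let `K ⊆ L, K' ⊆ U` be valued fields with `L/K` separated.  If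
`v(L) ∩ v(K') = v(K)` and the residue fields of `L` and `K'` are linearly disjoint over
the residue field of `K`, then every tuple from `L` which is valuation independent over
`K` remains valuation independent over `K'`; in particular `L` and `K'` are linearly
disjoint over `K`. -/
theorem valuatively_disjoint {U Γ₀ : Type*} [Field U] [LinearOrderedCommGroupWithZero Γ₀]
    (v : Valuation U Γ₀) (K L K' : Subfield U) (hKL : K ≤ L) (hKK' : K ≤ K')
    -- `L/K` is separated: every `K`-linearly independent tuple from `L` spans (over `K`)
    -- a subspace admitting a valuation basis.
    (hsep : ∀ (n : ℕ) (x : Fin n → U), (∀ i, x i ∈ L) → LinIndepOver K x →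
      ∃ c : Fin n → U, (∀ i, c i ∈ L) ∧ ValIndep v K c ∧
        (∀ j, InSpan K c (x j)) ∧ (∀ j, InSpan K x (c j)))
    -- `v(L) ∩ v(K') = v(K)`.
    (hval : ∀ x ∈ L, ∀ y ∈ K', x ≠ 0 → y ≠ 0 → v x = v y →
      ∃ z ∈ K, z ≠ (0 : U) ∧ v z = v x)
    -- `res(L)` and `res(K')` are linearly disjoint over `res(K)`.
    (hres : ∀ (n : ℕ) (x : Fin n → U), (∀ i, x i ∈ L) → (∀ i, v (x i) ≤ 1) →
      ResIndep v K x → ResIndep v K' x) :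
    (∀ (n : ℕ) (b : Fin n → U), (∀ i, b i ∈ L) → ValIndep v K b → ValIndep v K' b) ∧
    (∀ (n : ℕ) (b : Fin n → U), (∀ i, b i ∈ L) → LinIndepOver K b → LinIndepOver K' b) := by
  refine ⟨fun n b hbL hb => hb.mono hKL hKK' hval hres hbL, fun n b hbL hb => ?_⟩
  obtain ⟨c, hcL, hcK, hbc, hcb⟩ := hsep n b hbL hb
  have hcK' : ValIndep v K' c := hcK.mono hKL hKK' hval hres hcL
  have hc : LinIndepOver K c := hb.of_forall_inSpan hbc
  exact (hcK'.linIndepOver hc.ne_zero).of_forall_inSpan fun j => (hcb j).mono hKK'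
end

section
/- Let (K,v) be a valued field, V a K-vector space with a valuation v : V → X (X an ordered Γ-set), and suppose (y_1,...,y_n) is a separating family in V. If x ∈ V satisfies v(x) = max{v(x - λ·y) : λ ∈ K^n} (the maximum exists and is attained at λ = 0), then the family (x, y_1,...,y_n) is separating: for all μ ∈ K and λ ∈ K^n, v(μx + Σλ_iy_i) = min(v(μx), min_i v(λ_iy_i)). -/
/-- Let `(K, v)` be a valued field (multiplicative convention, value monoid `Γ₀`), `V` a
`K`-vector space with a valuation `w : V → X`, where `X` is a linearly ordered set with
least element `⊥` (corresponding to `∞`) and an order-respecting action `f` of `Γ₀`.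
Suppose `(y₁, ..., yₙ)` is a separating family in `V` and `x ∈ V` satisfies
`w x = min {w (x - ∑ λᵢ • yᵢ) : λ ∈ Kⁿ}` (multiplicatively: `w x ≤ w (x - ∑ λᵢ • yᵢ)`
for all `λ`, the minimum being attained at `λ = 0`).  Then the family
`(x, y₁, ..., yₙ)` is separating:
`w (μ • x + ∑ aᵢ • yᵢ) = max (f (v μ) (w x)) (maxᵢ f (v aᵢ) (w yᵢ))`. -/
theorem separating_extend {K Γ₀ X V : Type*} [Field K]
    [LinearOrderedCommGroupWithZero Γ₀] [LinearOrder X] [OrderBot X]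
    [AddCommGroup V] [Module K V]
    (v : Valuation K Γ₀)
    (f : Γ₀ → X → X)
    (hone : ∀ x : X, f 1 x = x)
    (hact : ∀ (γ δ : Γ₀) (x : X), f (γ * δ) x = f γ (f δ x))
    (hmono : ∀ γ : Γ₀, Monotone (f γ))
    (hmono' : ∀ x : X, Monotone fun γ : Γ₀ => f γ x)
    (hbot : ∀ γ : Γ₀, f γ ⊥ = ⊥)
    (w : V → X)
    (hw0 : w 0 = ⊥) (hw0' : ∀ z : V, w z = ⊥ → z = 0)
    (hwadd : ∀ z z' : V, w (z + z') ≤ max (w z) (w z'))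
    (hwsmul : ∀ (a : K) (z : V), w (a • z) = f (v a) (w z))
    {n : ℕ} (y : Fin n → V)
    (hsep : ∀ a : Fin n → K,
      w (∑ i, a i • y i) = Finset.univ.sup fun i => f (v (a i)) (w (y i)))
    (x : V)
    (hx : ∀ lam : Fin n → K, w x ≤ w (x - ∑ i, lam i • y i)) :
    ∀ (μ : K) (a : Fin n → K),
      w (μ • x + ∑ i, a i • y i) =
        max (f (v μ) (w x)) (Finset.univ.sup fun i => f (v (a i)) (w (y i))) := by
  intro μ a
  by_cases hμ : μ = 0
  · subst hμ
    have h0 : f (v 0) (w x) = ⊥ := by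
      rw [← hwsmul 0 x, zero_smul, hw0]
    rw [zero_smul, zero_add, hsep a, h0, max_eq_right bot_le]
  · -- key: f (v μ) (w x) ≤ w (μ • x + ∑ a y)
    have hrw : μ • (x - ∑ i, (-(μ⁻¹ * a i)) • y i) = μ • x + ∑ i, a i • y i := by
      rw [smul_sub, Finset.smul_sum, sub_eq_add_neg, ← Finset.sum_neg_distrib]
      congr 1
      apply Finset.sum_congr rfl
      intro i _
      rw [← neg_smul, smul_smul]
      congr 1
      field_simp
    have key : f (v μ) (w x) ≤ w (μ • x + ∑ i, a i • y i) := by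
      calc f (v μ) (w x) ≤ f (v μ) (w (x - ∑ i, (-(μ⁻¹ * a i)) • y i)) :=
            hmono _ (hx _)
        _ = w (μ • (x - ∑ i, (-(μ⁻¹ * a i)) • y i)) := (hwsmul _ _).symm
        _ = _ := by rw [hrw]
    have hneg : ∀ z : V, w (-z) = w z := by
      intro z
      rw [← neg_one_smul K z, hwsmul, Valuation.map_neg, Valuation.map_one, hone]
    have hsum : w (∑ i, a i • y i) ≤ w (μ • x + ∑ i, a i • y i) := by
      have : (∑ i, a i • y i) = (μ • x + ∑ i, a i • y i) + (-(μ • x)) := by abel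
      conv_lhs => rw [this]
      refine le_trans (hwadd _ _) (max_le le_rfl ?_)
      rw [hneg, hwsmul]
      exact key
    refine le_antisymm ?_ ?_
    · refine le_trans (hwadd _ _) ?_
      rw [hwsmul, hsep]
    · rw [← hsep]
      exact max_le key hsum
end

section
/- Let K be a spherically complete valued field (every chain of balls has nonempty intersection). Then every finite-dimensional valued K-vector space (V, v) admits a separating basis. -/
/-!
Build a separating family spanning the same space as a given one, adding one vector at a time.
A new vector `y` can be adjoined to a separating family `z` once it is replaced by `y - u`, where
`u` is a best approximation of `y` in the span of `z`: then `w (a • (y - u) + s)` is the maximum of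
`w (a • (y - u))` and `w s` for every `s` in that span. Best approximations exist by spherical
completeness: since `z` is separating, `w (y - ∑ cᵢ zᵢ)` controls each coordinate separately, and
for fixed `i` the sets `{t | w ((t - cᵢ) • zᵢ) ≤ w (y - ∑ cⱼ zⱼ)}`, indexed by the coefficient
vectors `c`, form a chain of ultrametrically convex sets, hence have a common point `xᵢ`; the
vector `x` is then a best coefficient vector.
-/

open Finset

theorem Submodule.span_insert_sub_of_mem {R M : Type*} [Ring R] [AddCommGroup M] [Module R M]
    {s : Set M} {u : M} (hu : u ∈ span R s) (x : M) :
    span R (insert (x - u) s) = span R (insert x s) := by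
  have hs : ∀ y, span R s ≤ span R (insert y s) := fun y => span_mono (Set.subset_insert _ _)
  apply le_antisymm <;> refine span_le.mpr (Set.insert_subset_iff.mpr ⟨?_, ?_⟩)
  · exact sub_mem (subset_span (Set.mem_insert _ _)) (hs x hu)
  · exact (Set.subset_insert _ _).trans subset_span
  · simpa using add_mem (subset_span (Set.mem_insert (x - u) s)) (hs _ hu)
  · exact (Set.subset_insert _ _).trans subset_span

section

variable {K Γ₀ : Type*} [Field K] [LinearOrderedCommGroupWithZero Γ₀]

namespace Valuation

variable (v : Valuation K Γ₀)

def closedBall (a : K) (r : Γ₀) : Set K := {x | v (x - a) ≤ r}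

def SphericallyComplete : Prop :=
  ∀ S : Set (K × Γ₀), S.Nonempty →
    (∀ p ∈ S, ∀ q ∈ S,
      v.closedBall p.1 p.2 ⊆ v.closedBall q.1 q.2 ∨ v.closedBall q.1 q.2 ⊆ v.closedBall p.1 p.2) →
    ∃ x, ∀ p ∈ S, x ∈ v.closedBall p.1 p.2

def IsUltraConvex (B : Set K) : Prop :=
  ∀ a ∈ B, ∀ b ∈ B, v.closedBall a (v (b - a)) ⊆ B

variable {v}

theorem closedBall_subset_closedBall_of_mem {a a' y : K} {r r' : Γ₀}
    (hy : y ∈ v.closedBall a r) (hy' : y ∈ v.closedBall a' r') (hr : r ≤ r') :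
    v.closedBall a r ⊆ v.closedBall a' r' := by
  intro x hx
  have hsplit : x - a' = (x - a) - (y - a) + (y - a') := by ring
  change v (x - a') ≤ r'
  rw [hsplit]
  exact v.map_add_le (v.map_sub_le (le_trans hx hr) (le_trans hy hr)) hy'

theorem map_sub_le_max_of_le {a b c x : K} (h : v (x - a) ≤ v (b - a)) :
    v (x - c) ≤ max (v (b - c)) (v (a - c)) := by
  have hba : v (b - a) ≤ max (v (b - c)) (v (a - c)) := by
    rw [← sub_sub_sub_cancel_right b a c]
    exact v.map_sub_le (le_max_left _ _) (le_max_right _ _)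
  rw [← sub_add_sub_cancel x a c]
  exact v.map_add_le (h.trans hba) (le_max_right _ _)

theorem isUltraConvex_setOf_mem {D : Set Γ₀} (hD : IsLowerSet D) (c : K) :
    v.IsUltraConvex {t | v (t - c) ∈ D} := by
  intro a ha b hb x hx
  exact hD (map_sub_le_max_of_le hx) (max_rec' D hb ha)

theorem IsUltraConvex.subset_closedBall {B : Set K} (hB : v.IsUltraConvex B) {a z : K}
    (ha : a ∈ B) (hz : z ∉ B) : B ⊆ v.closedBall a (v (z - a)) := by
  intro t ht
  by_contra hzt
  exact hz (hB a ha t ht (le_of_not_ge hzt))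

theorem SphericallyComplete.exists_forall_mem (hsc : v.SphericallyComplete) {ι : Type*}
    [Nonempty ι] {B : ι → Set K} (hconv : ∀ i, v.IsUltraConvex (B i))
    (hne : ∀ i, (B i).Nonempty) (hchain : ∀ i j, B i ⊆ B j ∨ B j ⊆ B i) :
    ∃ x, ∀ i, x ∈ B i := by
  by_cases hmin : ∃ k, ∀ i, B k ⊆ B i
  · obtain ⟨k, hk⟩ := hmin
    obtain ⟨x, hx⟩ := hne k
    exact ⟨x, fun i => hk i hx⟩
  push Not at hmin
  -- without a least member, each `B i` contains a closed ball that contains some `B k`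
  have hsqueeze : ∀ i, ∃ a r, (∃ k, B k ⊆ v.closedBall a r) ∧ v.closedBall a r ⊆ B i := by
    intro i
    obtain ⟨k, hk⟩ := hmin i
    obtain ⟨z, hzi, hzk⟩ := Set.not_subset.mp hk
    obtain ⟨a, ha⟩ := hne k
    have hki : B k ⊆ B i := (hchain i k).resolve_left hk
    exact ⟨a, v (z - a), ⟨k, (hconv k).subset_closedBall ha hzk⟩, hconv i a (hki ha) z hzi⟩
  let S : Set (K × Γ₀) := {p | ∃ k, B k ⊆ v.closedBall p.1 p.2}
  have hS : ∀ p ∈ S, ∀ q ∈ S,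
      v.closedBall p.1 p.2 ⊆ v.closedBall q.1 q.2 ∨ v.closedBall q.1 q.2 ⊆ v.closedBall p.1 p.2 := by
    rintro ⟨a, r⟩ ⟨k, hk⟩ ⟨a', r'⟩ ⟨k', hk'⟩
    obtain ⟨y, hy, hy'⟩ : ∃ y, y ∈ B k ∧ y ∈ B k' := by
      rcases hchain k k' with h | h
      · obtain ⟨y, hy⟩ := hne k
        exact ⟨y, hy, h hy⟩
      · obtain ⟨y, hy⟩ := hne k'
        exact ⟨y, h hy, hy⟩
    rcases le_total r r' with h | h
    · exact .inl (closedBall_subset_closedBall_of_mem (hk hy) (hk' hy') h)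
    · exact .inr (closedBall_subset_closedBall_of_mem (hk' hy') (hk hy) h)
  obtain ⟨a, r, hS₀, -⟩ := hsqueeze (Classical.arbitrary ι)
  obtain ⟨x, hx⟩ := hsc S ⟨(a, r), hS₀⟩ hS
  refine ⟨x, fun i => ?_⟩
  obtain ⟨a, r, hk, hi⟩ := hsqueeze i
  exact hi (hx (a, r) hk)

end Valuation

variable {X V : Type*} [LinearOrder X] [OrderBot X] [AddCommGroup V] [Module K V]

structure IsVectorValuation (v : Valuation K Γ₀) (f : Γ₀ → X → X) (w : V → X) : Prop where
  act_one : ∀ x, f 1 x = x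
  act_mono_right : ∀ γ, Monotone (f γ)
  act_mono_left : ∀ x, Monotone fun γ => f γ x
  map_zero : w 0 = ⊥
  map_add_le_max : ∀ z z', w (z + z') ≤ max (w z) (w z')
  map_smul : ∀ a z, w (a • z) = f (v a) (w z)

def IsSeparating (v : Valuation K Γ₀) (f : Γ₀ → X → X) (w : V → X) {ι : Type*} [Fintype ι]
    (z : ι → V) : Prop :=
  ∀ a : ι → K, w (∑ i, a i • z i) = univ.sup fun i => f (v (a i)) (w (z i))

variable {v : Valuation K Γ₀} {f : Γ₀ → X → X} {w : V → X}

namespace IsVectorValuation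

variable (hw : IsVectorValuation v f w)
include hw

theorem map_neg (z : V) : w (-z) = w z := by
  rw [← neg_one_smul K z, hw.map_smul, v.map_neg, v.map_one, hw.act_one]

theorem map_sub_le_max (z z' : V) : w (z - z') ≤ max (w z) (w z') := by
  simpa only [sub_eq_add_neg, hw.map_neg] using hw.map_add_le_max z (-z')

theorem act_map_zero (z : V) : f (v 0) (w z) = ⊥ := by
  rw [← hw.map_smul, zero_smul, hw.map_zero]

theorem map_smul_add_of_forall_le {W : Submodule K V} {y : V} (hy : ∀ u ∈ W, w y ≤ w (y + u))
    (a : K) {s : V} (hs : s ∈ W) : w (a • y + s) = max (f (v a) (w y)) (w s) := by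
  rcases eq_or_ne a 0 with rfl | ha
  · rw [zero_smul, zero_add, hw.act_map_zero, bot_sup_eq]
  have hy' : f (v a) (w y) ≤ w (a • y + s) :=
    calc f (v a) (w y) ≤ f (v a) (w (y + a⁻¹ • s)) := hw.act_mono_right _ (hy _ (W.smul_mem _ hs))
      _ = w (a • y + s) := by rw [← hw.map_smul, smul_add, smul_inv_smul₀ ha]
  have hs' : w s ≤ w (a • y + s) :=
    calc w s = w (a • y + s - a • y) := by rw [add_sub_cancel_left]
      _ ≤ max (w (a • y + s)) (w (a • y)) := hw.map_sub_le_max _ _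
      _ ≤ w (a • y + s) := max_le le_rfl (by rwa [hw.map_smul])
  refine le_antisymm ?_ (max_le hy' hs')
  rw [← hw.map_smul]
  exact hw.map_add_le_max _ _

end IsVectorValuation

theorem IsSeparating.cons (hw : IsVectorValuation v f w) {n : ℕ} {z : Fin n → V}
    (hz : IsSeparating v f w z) {y : V} (hy : ∀ u ∈ Submodule.span K (Set.range z), w y ≤ w (y + u)) :
    IsSeparating v f w (Fin.cons y z : Fin (n + 1) → V) := by
  intro a
  have hs : ∑ i, a i.succ • z i ∈ Submodule.span K (Set.range z) :=
    Submodule.sum_mem _ fun i _ => Submodule.smul_mem _ _ (Submodule.subset_span ⟨i, rfl⟩)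
  rw [Fin.sum_univ_succ, Fin.univ_succ, sup_cons, sup_map]
  simp only [Fin.cons_zero, Fin.cons_succ]
  rw [hw.map_smul_add_of_forall_le hy _ hs, hz]
  rfl

section Approximation

variable (hw : IsVectorValuation v f w) {ι : Type*} [Fintype ι] {z : ι → V}
  (hz : IsSeparating v f w z) (y : V)
include hw hz

theorem IsSeparating.act_sub_le {c d : ι → K}
    (h : w (y - ∑ i, c i • z i) ≤ w (y - ∑ i, d i • z i)) (i : ι) :
    f (v (c i - d i)) (w (z i)) ≤ w (y - ∑ i, d i • z i) := by
  have hsum : ∑ i, (c i - d i) • z i = (y - ∑ i, d i • z i) - (y - ∑ i, c i • z i) := by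
    simp only [sub_smul, sum_sub_distrib]
    abel
  have hle := (hw.map_sub_le_max _ _).trans (max_le le_rfl h)
  rw [← hsum, hz] at hle
  exact Finset.sup_le_iff.mp hle i (mem_univ i)

/-- The `i`-th coordinate of a best approximation of `y` by combinations of `z`. -/
theorem IsSeparating.exists_forall_act_sub_le (hsc : v.SphericallyComplete) (i : ι) :
    ∃ x : K, ∀ c : ι → K, f (v (x - c i)) (w (z i)) ≤ w (y - ∑ i, c i • z i) := by
  set g : (ι → K) → X := fun c => w (y - ∑ i, c i • z i)
  let B : (ι → K) → Set K := fun c => {t | f (v (t - c i)) (w (z i)) ≤ g c}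
  have hsubset : ∀ c d, g c ≤ g d → B c ⊆ B d := by
    intro c d hcd t ht
    have hle : v (t - d i) ≤ max (v (t - c i)) (v (c i - d i)) := by
      rw [← sub_add_sub_cancel t (c i) (d i)]
      exact v.map_add _ _
    calc f (v (t - d i)) (w (z i)) ≤ f (max (v (t - c i)) (v (c i - d i))) (w (z i)) :=
          hw.act_mono_left _ hle
      _ = max (f (v (t - c i)) (w (z i))) (f (v (c i - d i)) (w (z i))) :=
          (hw.act_mono_left _).map_max
      _ ≤ g d := max_le (le_trans ht hcd) (hz.act_sub_le hw y hcd i)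
  exact hsc.exists_forall_mem (B := B)
    (fun c => v.isUltraConvex_setOf_mem (D := {γ | f γ (w (z i)) ≤ g c})
      (fun _ _ h hγ => le_trans (hw.act_mono_left _ h) hγ) (c i))
    (fun c => ⟨c i, by simp only [B, Set.mem_ofPred_eq, sub_self, hw.act_map_zero, bot_le]⟩)
    (fun c d => (le_total (g c) (g d)).imp (hsubset c d) (hsubset d c))

theorem IsSeparating.exists_forall_le (hsc : v.SphericallyComplete) :
    ∃ c : ι → K, ∀ d : ι → K, w (y - ∑ i, c i • z i) ≤ w (y - ∑ i, d i • z i) := by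
  choose x hx using hz.exists_forall_act_sub_le hw y hsc
  refine ⟨x, fun c => ?_⟩
  calc w (y - ∑ i, x i • z i) = w ((y - ∑ i, c i • z i) + ∑ i, (c i - x i) • z i) := by
        simp only [sub_smul, sum_sub_distrib]
        abel_nf
    _ ≤ max (w (y - ∑ i, c i • z i)) (w (∑ i, (c i - x i) • z i)) := hw.map_add_le_max _ _
    _ ≤ w (y - ∑ i, c i • z i) := by
      refine max_le le_rfl ?_
      rw [hz]
      exact Finset.sup_le fun i _ => by rw [v.map_sub_swap]; exact hx i c

end Approximation

theorem exists_isSeparating_span_eq (hsc : v.SphericallyComplete) (hw : IsVectorValuation v f w) :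
    ∀ {n : ℕ} (y : Fin n → V), ∃ z : Fin n → V,
      IsSeparating v f w z ∧ Submodule.span K (Set.range z) = Submodule.span K (Set.range y)
  | 0, y => ⟨y, fun a => by simp [hw.map_zero], rfl⟩
  | n + 1, y => by
    obtain ⟨z, hz, hspan⟩ := exists_isSeparating_span_eq hsc hw (Fin.tail y)
    obtain ⟨c, hc⟩ := hz.exists_forall_le hw (y 0) hsc
    have hu : ∑ i, c i • z i ∈ Submodule.span K (Set.range z) :=
      Submodule.sum_mem _ fun i _ => Submodule.smul_mem _ _ (Submodule.subset_span ⟨i, rfl⟩)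
    refine ⟨Fin.cons (y 0 - ∑ i, c i • z i) z, hz.cons hw ?_, ?_⟩
    · intro u hu'
      obtain ⟨d, rfl⟩ := (Submodule.mem_span_range_iff_exists_fun K).mp hu'
      convert hc (c - d) using 2
      simp only [Pi.sub_apply, sub_smul, sum_sub_distrib]
      abel
    · conv_rhs => rw [← Fin.cons_self_tail y]
      rw [Fin.range_cons, Fin.range_cons, Submodule.span_insert_sub_of_mem hu,
        Submodule.span_insert, Submodule.span_insert, hspan]

end

theorem separating_basis_of_spherically_complete_general {K Γ₀ X V : Type*} [Field K]
    [LinearOrderedCommGroupWithZero Γ₀] [LinearOrder X] [OrderBot X]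
    [AddCommGroup V] [Module K V] [FiniteDimensional K V]
    (v : Valuation K Γ₀)
    -- spherical completeness: every chain of closed balls has a common point
    (hsc : ∀ S : Set (K × Γ₀), S.Nonempty →
      (∀ p ∈ S, ∀ q ∈ S,
        {x : K | v (x - p.1) ≤ p.2} ⊆ {x : K | v (x - q.1) ≤ q.2} ∨
        {x : K | v (x - q.1) ≤ q.2} ⊆ {x : K | v (x - p.1) ≤ p.2}) →
      ∃ x : K, ∀ p ∈ S, v (x - p.1) ≤ p.2)
    (f : Γ₀ → X → X)
    (hone : ∀ x : X, f 1 x = x)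
    (hmono : ∀ γ : Γ₀, Monotone (f γ))
    (hmono' : ∀ x : X, Monotone fun γ : Γ₀ => f γ x)
    (w : V → X)
    (hw0 : w 0 = ⊥)
    (hwadd : ∀ z z' : V, w (z + z') ≤ max (w z) (w z'))
    (hwsmul : ∀ (a : K) (z : V), w (a • z) = f (v a) (w z)) :
    ∃ b : Module.Basis (Fin (Module.finrank K V)) K V,
      ∀ a : Fin (Module.finrank K V) → K,
        w (∑ i, a i • b i) = Finset.univ.sup fun i => f (v (a i)) (w (b i)) := by
  have hw : IsVectorValuation v f w := ⟨hone, hmono, hmono', hw0, hwadd, hwsmul⟩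
  obtain ⟨z, hz, hspan⟩ := exists_isSeparating_span_eq hsc hw (Module.finBasis K V)
  have htop : ⊤ ≤ Submodule.span K (Set.range z) := by rw [hspan, Module.Basis.span_eq]
  refine ⟨basisOfTopLeSpanOfCardEqFinrank z htop (Fintype.card_fin _), ?_⟩
  rw [coe_basisOfTopLeSpanOfCardEqFinrank]
  exact hz

/-- Let `K` be a spherically complete valued field (every chain of closed balls has
nonempty intersection).  Then every finite-dimensional valued `K`-vector space `(V, w)`
(valuation `w : V → X` into a linearly ordered set `X` with least element `⊥ = ∞` and an
order-respecting action `f` of the value monoid `Γ₀`, multiplicative convention) admits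
a separating basis. -/
theorem separating_basis_of_spherically_complete {K Γ₀ X V : Type*} [Field K]
    [LinearOrderedCommGroupWithZero Γ₀] [LinearOrder X] [OrderBot X]
    [AddCommGroup V] [Module K V] [FiniteDimensional K V]
    (v : Valuation K Γ₀)
    -- spherical completeness: every chain of closed balls has a common point
    (hsc : ∀ S : Set (K × Γ₀), S.Nonempty →
      (∀ p ∈ S, ∀ q ∈ S,
        {x : K | v (x - p.1) ≤ p.2} ⊆ {x : K | v (x - q.1) ≤ q.2} ∨
        {x : K | v (x - q.1) ≤ q.2} ⊆ {x : K | v (x - p.1) ≤ p.2}) →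
      ∃ x : K, ∀ p ∈ S, v (x - p.1) ≤ p.2)
    (f : Γ₀ → X → X)
    (hone : ∀ x : X, f 1 x = x)
    (hact : ∀ (γ δ : Γ₀) (x : X), f (γ * δ) x = f γ (f δ x))
    (hmono : ∀ γ : Γ₀, Monotone (f γ))
    (hmono' : ∀ x : X, Monotone fun γ : Γ₀ => f γ x)
    (hbot : ∀ γ : Γ₀, f γ ⊥ = ⊥)
    (w : V → X)
    (hw0 : w 0 = ⊥) (hw0' : ∀ z : V, w z = ⊥ → z = 0)
    (hwadd : ∀ z z' : V, w (z + z') ≤ max (w z) (w z'))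
    (hwsmul : ∀ (a : K) (z : V), w (a • z) = f (v a) (w z)) :
    ∃ b : Module.Basis (Fin (Module.finrank K V)) K V,
      ∀ a : Fin (Module.finrank K V) → K,
        w (∑ i, a i • b i) = Finset.univ.sup fun i => f (v (a i)) (w (b i)) :=
  separating_basis_of_spherically_complete_general v hsc f hone hmono hmono' w hw0 hwadd hwsmul
end

section
/- Let K be a valued field, RV = K^×/(1+m) ∪ {0} with map rv : K → RV. Let b be a ball in an algebraically closed valued field extension, P(x) = ∏_{i<d}(x - e_i) a polynomial whose roots e_i all lie outside b. Then for any c, g ∈ b, rv(P(c)) = rv(P(g)). -/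
/-!
Write `x ~ y` for `v (x - y) < v x`, i.e. `rv x = rv y` with `x ≠ 0`. This relation is
compatible with products, so it suffices to show `c - eᵢ ~ g - eᵢ` for each root, i.e.
`v (c - g) < v (c - eᵢ)`. If `c₀` is a centre of the ball, then `eᵢ ∉ b` gives
`v (c - c₀), v (g - c₀) < v (eᵢ - c₀)`, so by the ultrametric inequality
`v (c - g) < v (eᵢ - c₀) = v (c - eᵢ)`.
-/

namespace Valuation

variable {R Γ₀ : Type*} [LinearOrderedCommGroupWithZero Γ₀]

section CommRing

variable [CommRing R] (v : Valuation R Γ₀)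

theorem map_mul_sub_mul_lt {a a' b b' : R} (ha : v (a - a') < v a) (hb : v (b - b') < v b) :
    v (a * b - a' * b') < v (a * b) := by
  have ha₀ : 0 < v a := zero_le.trans_lt ha
  have hb₀ : 0 < v b := zero_le.trans_lt hb
  have hb' : v b' = v b := v.map_eq_of_sub_lt (by rwa [v.map_sub_swap])
  have hsplit : a * b - a' * b' = a * (b - b') + (a - a') * b' := by ring
  have h₁ : v (a * (b - b')) < v (a * b) := by
    rw [v.map_mul, v.map_mul]
    exact mul_lt_mul_of_pos_left hb ha₀
  have h₂ : v ((a - a') * b') < v (a * b) := by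
    rw [v.map_mul, v.map_mul, hb']
    exact mul_lt_mul_of_pos_right ha hb₀
  rw [hsplit]
  exact (v.map_add _ _).trans_lt (max_lt h₁ h₂)

theorem map_prod_sub_prod_lt {ι : Type*} (s : Finset ι) {a b : ι → R}
    (h : ∀ i ∈ s, v (a i - b i) < v (a i)) :
    v ((∏ i ∈ s, a i) - ∏ i ∈ s, b i) < v (∏ i ∈ s, a i) := by
  classical
  induction s using Finset.induction_on with
  | empty => simp
  | insert j s hj ih =>
    rw [Finset.prod_insert hj, Finset.prod_insert hj]
    exact v.map_mul_sub_mul_lt (h j (s.mem_insert_self j))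
      (ih fun i hi => h i (Finset.mem_insert_of_mem hi))

end CommRing

theorem map_sub_lt_map_sub_of_lt [Ring R] (v : Valuation R Γ₀) {c g e c₀ : R}
    (hc : v (c - c₀) < v (e - c₀)) (hg : v (g - c₀) < v (e - c₀)) :
    v (c - g) < v (c - e) := by
  have hce : v (c - e) = v (e - c₀) := by
    rw [← sub_sub_sub_cancel_right c e c₀]
    exact v.map_sub_eq_of_lt_right hc
  rw [hce, ← sub_sub_sub_cancel_right c g c₀]
  exact v.map_sub_lt hc hg

end Valuation

/-- Leading-term computation: let `b` be a ball (open or closed) in a valued field `K`,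
`P(x) = ∏_{i<d} (x - eᵢ)` a polynomial all of whose roots `eᵢ` lie outside `b`.  Then
for any `c, g ∈ b`, `rv (P c) = rv (P g)`, where `rv u = rv w` means `u = w` or
`v (u - w) < v u` (multiplicative convention, i.e. `v (u - w) > v u` additively). -/
theorem rv_eq_of_roots_outside {K Γ₀ : Type*} [Field K]
    [LinearOrderedCommGroupWithZero Γ₀]
    (v : Valuation K Γ₀) (b : Set K)
    (hball : ∃ (c₀ : K) (γ : Γ₀),
      b = {x : K | v (x - c₀) ≤ γ} ∨ b = {x : K | v (x - c₀) < γ})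
    (d : ℕ) (e : Fin d → K) (he : ∀ i, e i ∉ b)
    (c g : K) (hc : c ∈ b) (hg : g ∈ b) :
    (∏ i, (c - e i)) = (∏ i, (g - e i)) ∨
      v ((∏ i, (c - e i)) - ∏ i, (g - e i)) < v (∏ i, (c - e i)) := by
  obtain ⟨c₀, γ, hb⟩ := hball
  have hinside : ∀ x ∈ b, ∀ y ∉ b, v (x - c₀) < v (y - c₀) := by
    rcases hb with rfl | rfl
    · exact fun x hx y hy => lt_of_le_of_lt hx (not_le.mp hy)
    · exact fun x hx y hy => lt_of_lt_of_le hx (not_lt.mp hy)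
  refine Or.inr (v.map_prod_sub_prod_lt _ fun i _ => ?_)
  rw [sub_sub_sub_cancel_right]
  exact v.map_sub_lt_map_sub_of_lt (hinside c hc _ (he i)) (hinside g hg _ (he i))
end

section
/- Let K be a valued field of residue characteristic 0, b a closed ball of radius γ, and c, g, e_0,...,e_{d-1} ∈ b such that the maximal open subball of b around c contains neither g nor any e_i (i.e. v(c−g) = γ and v(c−e_i) = γ for all i). Write P(x) = ∏_{i<d}(x−e_i) and P(y+x) = Σ_i P_i(y)x^i. Then v(P(c)) = dγ, each P_i(g)(c−g)^{i} has valuation ≥ dγ, and rv(P(c)) = Σ_{i≤d} of the images res((P_i(g)(c−g)^i)/(c−g)^d) summed in the residue field, i.e. rv(P(c)) = rv(c−g)^d · res(Q(1)) where Q(x) := P((c−g)x+g)/(c−g)^d ∈ O[x] and v(Q(1)) = 0. -/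
open Polynomial

private lemma val_msprod_le {K Γ₀ : Type*} [Field K] [LinearOrderedCommGroupWithZero Γ₀]
    (v : Valuation K Γ₀) (γ : Γ₀) (t : Multiset K) (ht : ∀ a ∈ t, v a ≤ γ) :
    v t.prod ≤ γ ^ Multiset.card t := by
  induction t using Multiset.induction with
  | empty => simp
  | cons a s ih =>
    rw [Multiset.prod_cons, Multiset.card_cons, pow_succ', v.map_mul]
    exact mul_le_mul' (ht a (Multiset.mem_cons_self a s))
      (ih fun b hb => ht b (Multiset.mem_cons_of_mem hb))

private lemma val_mssum_le {K Γ₀ : Type*} [Field K] [LinearOrderedCommGroupWithZero Γ₀]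
    (v : Valuation K Γ₀) (γ : Γ₀) (t : Multiset K) (ht : ∀ a ∈ t, v a ≤ γ) :
    v t.sum ≤ γ := by
  induction t using Multiset.induction with
  | empty => simp
  | cons a s ih =>
    rw [Multiset.sum_cons]
    exact le_trans (v.map_add _ _) (max_le (ht a (Multiset.mem_cons_self a s))
      (ih fun b hb => ht b (Multiset.mem_cons_of_mem hb)))

private lemma val_esymm_le {K Γ₀ : Type*} [Field K] [LinearOrderedCommGroupWithZero Γ₀]
    (v : Valuation K Γ₀) (γ : Γ₀) (s : Multiset K) (hs : ∀ a ∈ s, v a ≤ γ) (m : ℕ) :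
    v (s.esymm m) ≤ γ ^ m := by
  refine val_mssum_le v _ _ fun a ha => ?_
  simp only [Multiset.mem_map] at ha
  obtain ⟨t, ht, rfl⟩ := ha
  rw [Multiset.mem_powersetCard] at ht
  calc v t.prod ≤ γ ^ Multiset.card t :=
        val_msprod_le v γ t fun b hb => hs b (Multiset.subset_of_le ht.1 hb)
    _ = γ ^ m := by rw [ht.2]

/-- Leading-term computation on a closed ball, residue characteristic zero.  Let `b` be
a closed ball of radius `γ` and `c, g, e₀, ..., e_{d-1} ∈ b` such that the maximal open
subball of `b` around `c` contains neither `g` nor any `eᵢ`, i.e. `v (c - g) = γ` and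
`v (c - eᵢ) = γ` for all `i` (multiplicative convention).  Write
`P(x) = ∏_{i<d} (x - eᵢ)` and `P(y + x) = ∑ᵢ Pᵢ(y) xⁱ` (Taylor expansion).  Then
`P(c) = ∑_{i ≤ d} Pᵢ(g) (c-g)ⁱ` with `v (P c) = γ^d` (`= dγ` additively), each term
`Pᵢ(g)(c-g)ⁱ` has valuation `≤ γ^d` (`≥ dγ` additively) — so
`Q(x) := P((c-g)x + g)/(c-g)^d ∈ O[x]` — and `v (P c) = v ((c-g)^d)`, i.e.
`v (Q 1) = 0` additively and `rv (P c) = rv (c-g)^d · res (Q 1)`. -/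
theorem rv_closed_ball_taylor {K Γ₀ : Type*} [Field K]
    [LinearOrderedCommGroupWithZero Γ₀]
    (v : Valuation K Γ₀)
    -- residue characteristic zero
    (hres : ∀ m : ℕ, 0 < m → v (m : K) = 1)
    (d : ℕ) (e : Fin d → K) (c g : K) (γ : Γ₀) (hγ : γ ≠ 0)
    (hcg : v (c - g) = γ) (hce : ∀ i, v (c - e i) = γ) :
    (eval c (∏ j, (X - C (e j))) =
      ∑ i ∈ Finset.range (d + 1), (taylor g (∏ j, (X - C (e j)))).coeff i * (c - g) ^ i) ∧
    v (eval c (∏ j, (X - C (e j)))) = γ ^ d ∧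
    (∀ i : ℕ, v ((taylor g (∏ j, (X - C (e j)))).coeff i * (c - g) ^ i) ≤ γ ^ d) ∧
    v (eval c (∏ j, (X - C (e j)))) = v ((c - g) ^ d) := by
  set P : K[X] := ∏ j, (X - C (e j)) with hP
  have hdeg : P.natDegree = d := by
    rw [hP, natDegree_prod _ _ (fun j _ => X_sub_C_ne_zero (e j))]
    simp
  have htay : taylor g P = ∏ j, (X - C (e j - g)) := by
    rw [hP, show (taylor g : K[X] →ₗ[K] K[X]) = (taylorAlgHom g : K[X] →ₐ[K] K[X]).toLinearMap
      from rfl]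
    simp only [AlgHom.toLinearMap_apply, map_prod, taylorAlgHom_apply, map_sub, taylor_X,
      taylor_C]
    congr 1
    ext j
    push_cast
    ring
  -- valuation of e j - g
  have heg : ∀ j, v (e j - g) ≤ γ := by
    intro j
    have : e j - g = (c - g) - (c - e j) := by ring
    rw [this]
    exact le_trans (v.map_sub _ _) (by rw [hcg, hce]; simp)
  -- coefficient bound
  have hcoeff : ∀ i : ℕ, i ≤ d → v ((taylor g P).coeff i) ≤ γ ^ (d - i) := by
    intro i hi
    have hmap : taylor g P = ((Finset.univ.val.map fun j => e j - g).map
        fun t => X - C t).prod := by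
      rw [htay, Multiset.map_map]
      rfl
    have hcard : Multiset.card (Finset.univ.val.map fun j : Fin d => e j - g) = d := by simp
    rw [hmap, Multiset.prod_X_sub_C_coeff _ (by rw [hcard]; exact hi), hcard, v.map_mul,
      v.map_pow, v.map_neg, v.map_one, one_pow, one_mul]
    refine val_esymm_le v γ _ (fun a ha => ?_) _
    simp only [Multiset.mem_map] at ha
    obtain ⟨j, _, rfl⟩ := ha
    exact heg j
  have hdegtay : (taylor g P).natDegree = d := by rw [natDegree_taylor, hdeg]
  refine ⟨?_, ?_, ?_, ?_⟩
  · have := taylor_eval_sub g P c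
    rw [← this, eval_eq_sum_range' (lt_of_le_of_lt hdegtay.le (Nat.lt_succ_self d))]
  · rw [hP, eval_prod]
    rw [map_prod]
    simp only [eval_sub, eval_X, eval_C, hce]
    simp
  · intro i
    rcases le_or_gt i d with hi | hi
    · rw [v.map_mul, v.map_pow, hcg]
      calc v ((taylor g P).coeff i) * γ ^ i ≤ γ ^ (d - i) * γ ^ i :=
            mul_le_mul_left (hcoeff i hi) _
        _ = γ ^ d := by rw [← pow_add, Nat.sub_add_cancel hi]
    · rw [coeff_eq_zero_of_natDegree_lt (hdegtay ▸ hi)]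
      simp
  · rw [hP, eval_prod, map_prod, v.map_pow, hcg]
    simp only [eval_sub, eval_X, eval_C, hce]
    simp
end

section
/- For every r ∈ ℤ_{>0} there exists m ∈ ℤ_{>0} such that: in any algebraically closed valued field of characteristic zero, for every set B of r pairwise disjoint balls of the same radius and same type (all open or all closed), if the balls b[m] (the balls of radius rad(b) − v(m) around each b ∈ B) are still pairwise disjoint, then there is an injection from B into a finite power of RV = ⋃_n K^×/(1+nm_K) which is definable over the code of B. In the equicharacteristic zero case one may take any m ≥ 1 and the injection lands in RV_1-powers, constructed by recursion on r via: if r > 1, let γ = max distance between distinct balls of B; group B by the closed balls b' of radius γ containing them; for each group take the average c_{b'} of the corresponding maximal open subballs (elements of the k-vector space of open subballs of b' of radius γ), inject the set of averages by induction, and send b ⊆ b' to (rv(b − c_{b'}), image of c_{b'}). -/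
/-- `a` and `b` have the same leading term: `rv a = rv b` in `RV₁ = K^×/(1+m) ∪ {0}`
(multiplicative convention: `a = b`, or `v (a - b) < v a`). -/
def RvEq {K Γ₀ : Type*} [Field K] [LinearOrderedCommGroupWithZero Γ₀]
    (v : Valuation K Γ₀) (a b : K) : Prop :=
  a = b ∨ v (a - b) < v a

/-- The ball of radius `γ` around `c`: open if `op = true`, closed otherwise
(multiplicative convention). -/
def VBall {K Γ₀ : Type*} [Field K] [LinearOrderedCommGroupWithZero Γ₀]
    (v : Valuation K Γ₀) (op : Bool) (c : K) (γ : Γ₀) : Set K :=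
  if op then {x : K | v (x - c) < γ} else {x : K | v (x - c) ≤ γ}

section Aux

variable {K Γ₀ : Type} [Field K] [LinearOrderedCommGroupWithZero Γ₀]

/-- `x` is "smaller than the radius `γ`" (strictly if `op = true`). -/
def Sm (v : Valuation K Γ₀) (op : Bool) (γ : Γ₀) (x : K) : Prop :=
  if op then v x < γ else v x ≤ γ

variable {v : Valuation K Γ₀} {op : Bool} {γ : Γ₀}

lemma sm_false {δ : Γ₀} {x : K} : Sm v false δ x ↔ v x ≤ δ := by simp [Sm]

lemma mem_vball_iff {c x : K} : x ∈ VBall v op c γ ↔ Sm v op γ (x - c) := by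
  cases op <;> simp [VBall, Sm]

lemma sm_zero (hγ : γ ≠ 0) : Sm v op γ 0 := by
  cases op <;> simp [Sm, zero_lt_iff, hγ]

lemma sm_of_le {x y : K} (h : v x ≤ v y) (hy : Sm v op γ y) : Sm v op γ x := by
  cases op <;> simp only [Sm, if_true, if_false] at * <;>
    [exact le_trans h hy; exact lt_of_le_of_lt h hy]

lemma sm_neg {x : K} (h : Sm v op γ x) : Sm v op γ (-x) :=
  sm_of_le (le_of_eq (v.map_neg x)) h

lemma sm_add {x y : K} (hx : Sm v op γ x) (hy : Sm v op γ y) : Sm v op γ (x + y) := by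
  cases op <;> simp only [Sm, if_true, if_false] at * <;>
    [exact v.map_add_le hx hy; exact v.map_add_lt hx hy]

lemma sm_sub {x y : K} (hx : Sm v op γ x) (hy : Sm v op γ y) : Sm v op γ (x - y) := by
  rw [sub_eq_add_neg]; exact sm_add hx (sm_neg hy)

lemma sm_sum (hγ : γ ≠ 0) {ι : Type} (s : Finset ι) (g : ι → K)
    (h : ∀ i ∈ s, Sm v op γ (g i)) : Sm v op γ (∑ i ∈ s, g i) := by
  cases op <;> simp only [Sm, if_true, if_false] at *
  · exact v.map_sum_le h
  · exact v.map_sum_lt hγ h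

lemma vball_eq_iff (hγ : γ ≠ 0) {c c' : K} :
    VBall v op c γ = VBall v op c' γ ↔ Sm v op γ (c' - c) := by
  constructor
  · intro h
    have hc' : c' ∈ VBall v op c' γ := mem_vball_iff.2 (by simpa using sm_zero hγ)
    rw [← h] at hc'
    exact mem_vball_iff.1 hc'
  · intro h
    ext x
    simp only [mem_vball_iff]
    constructor
    · intro hx
      have := sm_sub hx h
      rwa [sub_sub_sub_cancel_right] at this
    · intro hx
      have := sm_add hx h
      rwa [sub_add_sub_cancel] at this

lemma aux_param (v : Valuation K Γ₀) (hv1 : ∀ k : ℕ, 0 < k → v (k : K) = 1) :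
    ∀ r : ℕ, ∀ (op : Bool) (γ : Γ₀), γ ≠ 0 →
      ∀ B : Finset K, B.card ≤ r →
      (∀ c ∈ B, ∀ c' ∈ B, c ≠ c' → VBall v op c γ ∩ VBall v op c' γ = ∅) →
      ∃ (n : ℕ) (ν : K → Fin n → K),
        (∀ c ∈ B, ∀ c' ∈ B,
          ((∀ j, RvEq v (ν c j) (ν c' j)) ↔ VBall v op c γ = VBall v op c' γ)) ∧
        (∀ σ : K ≃+* K, (∀ x : K, v (σ x) = v x) →
          (∀ c ∈ B, ∃ c' ∈ B, VBall v op (σ c) γ = VBall v op c' γ) →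
          ∀ c ∈ B, ∀ c' ∈ B, VBall v op (σ c) γ = VBall v op c' γ →
            ∀ j, RvEq v (ν c' j) (σ (ν c j))) := by
  intro r
  induction r with
  | zero =>
    intro op γ hγ B hcard _
    refine ⟨0, fun _ => Fin.elim0, ?_, ?_⟩
    · intro c hc
      simp [Finset.card_eq_zero.1 (Nat.le_zero.1 hcard)] at hc
    · intro _ _ _ _ _ _ _ _ j
      exact j.elim0
  | succ r ih =>
    intro op γ hγ B hcard hdisj
    classical
    by_cases hsmall : B.card ≤ 1
    · refine ⟨0, fun _ => Fin.elim0, ?_, ?_⟩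
      · intro c hc c' hc'
        have hcc : c = c' := Finset.card_le_one.1 hsmall c hc c' hc'
        subst hcc
        exact ⟨fun _ => rfl, fun _ j => j.elim0⟩
      · intro _ _ _ _ _ _ _ _ j
        exact j.elim0
    push_neg at hsmall
    obtain ⟨c₀, hc₀, c₁, hc₁, hc01⟩ := Finset.one_lt_card.1 hsmall
    -- distinct centers of B are "far apart"
    have hnsm : ∀ x ∈ B, ∀ y ∈ B, x ≠ y → ¬ Sm v op γ (x - y) := by
      intro x hx y hy hxy hsm
      have h1 : y ∈ VBall v op x γ := by
        rw [mem_vball_iff]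
        have := sm_neg hsm
        rwa [neg_sub] at this
      have h2 : y ∈ VBall v op y γ := by
        rw [mem_vball_iff, sub_self]
        exact sm_zero hγ
      exact Set.eq_empty_iff_forall_notMem.1 (hdisj x hx y hy hxy) y ⟨h1, h2⟩
    -- the minimal distance δ
    set D := ((B ×ˢ B).filter fun p => p.1 ≠ p.2).image (fun p => v (p.1 - p.2)) with hD
    have hDne : D.Nonempty :=
      ⟨v (c₀ - c₁), Finset.mem_image.2 ⟨(c₀, c₁),
        Finset.mem_filter.2 ⟨Finset.mem_product.2 ⟨hc₀, hc₁⟩, hc01⟩, rfl⟩⟩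
    set δ := D.min' hDne with hδdef
    have hδle : ∀ x ∈ B, ∀ y ∈ B, x ≠ y → δ ≤ v (x - y) := by
      intro x hx y hy hxy
      exact Finset.min'_le _ _ (Finset.mem_image.2 ⟨(x, y),
        Finset.mem_filter.2 ⟨Finset.mem_product.2 ⟨hx, hy⟩, hxy⟩, rfl⟩)
    obtain ⟨p, hpmem, hpδ⟩ := Finset.mem_image.1 (D.min'_mem hDne)
    rw [← hδdef] at hpδ
    have hpB := Finset.mem_product.1 (Finset.mem_filter.1 hpmem).1
    have hpne : p.1 ≠ p.2 := (Finset.mem_filter.1 hpmem).2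
    have hδ0 : δ ≠ 0 := by
      rw [← hpδ, Valuation.ne_zero_iff]
      exact sub_ne_zero.2 hpne
    have hsmδ : ∀ x : K, Sm v op γ x → v x < δ := by
      intro x hx
      have hnp : ¬ Sm v op γ (p.1 - p.2) := hnsm _ hpB.1 _ hpB.2 hpne
      rw [← hpδ]
      cases op <;> simp only [Sm, if_true, if_false] at hx hnp
      · exact lt_of_le_of_lt hx (lt_of_not_ge hnp)
      · exact lt_of_lt_of_le hx (le_of_not_gt hnp)
    -- groups and averages
    set Gr : K → Finset K := fun x => B.filter fun z => v (x - z) ≤ δ with hGrdef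
    set avg : K → K := fun x => (∑ z ∈ Gr x, z) / ((Gr x).card : K) with havgdef
    have hmemGr : ∀ x ∈ B, x ∈ Gr x := by
      intro x hx
      rw [hGrdef]
      exact Finset.mem_filter.2 ⟨hx, by simp [zero_le']⟩
    have hGrpos : ∀ x ∈ B, 0 < (Gr x).card := fun x hx => Finset.card_pos.2 ⟨x, hmemGr x hx⟩
    have hGrK : ∀ x ∈ B, ((Gr x).card : K) ≠ 0 := by
      intro x hx h0
      have h1 := hv1 _ (hGrpos x hx)
      rw [h0] at h1
      simp at h1
    have tri : ∀ a b c : K, v (a - b) ≤ δ → v (b - c) ≤ δ → v (a - c) ≤ δ := by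
      intro a b c h1 h2
      rw [show a - c = (a - b) + (b - c) by ring]
      exact v.map_add_le h1 h2
    have hGreq : ∀ x ∈ B, ∀ y ∈ B, v (x - y) ≤ δ → Gr x = Gr y := by
      intro x hx y hy hxy
      rw [hGrdef]
      ext z
      simp only [Finset.mem_filter, and_congr_right_iff]
      intro _
      constructor
      · intro h
        exact tri y x z (by rwa [v.map_sub_swap]) h
      · intro h
        exact tri x y z hxy h
    have havgeq : ∀ x ∈ B, ∀ y ∈ B, v (x - y) ≤ δ → avg x = avg y := by
      intro x hx y hy hxy
      rw [havgdef]
      simp only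
      rw [hGreq x hx y hy hxy]
    have hGr_sub : ∀ x : K, ∀ z ∈ Gr x, v (x - z) ≤ δ := by
      intro x z hz
      exact (Finset.mem_filter.1 hz).2
    have hGr_B : ∀ x : K, ∀ z ∈ Gr x, z ∈ B := by
      intro x z hz
      exact (Finset.mem_filter.1 hz).1
    have havg_close : ∀ x ∈ B, v (x - avg x) ≤ δ := by
      intro x hx
      have hn := hGrK x hx
      have hxe : x - avg x = (∑ z ∈ Gr x, (x - z)) / ((Gr x).card : K) := by
        rw [Finset.sum_sub_distrib, Finset.sum_const, nsmul_eq_mul, havgdef]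
        field_simp
      rw [hxe, v.map_div, hv1 _ (hGrpos x hx), div_one]
      exact v.map_sum_le (fun z hz => hGr_sub x z hz)
    have havg_inj : ∀ x ∈ B, ∀ y ∈ B, avg x = avg y → v (x - y) ≤ δ := by
      intro x hx y hy he
      rw [show x - y = (x - avg x) + (avg y - y) by rw [he]; ring]
      refine v.map_add_le (havg_close x hx) ?_
      rw [v.map_sub_swap]
      exact havg_close y hy
    have hdiffgroup : ∀ x ∈ B, ∀ y ∈ B, avg x ≠ avg y → δ < v (x - y) := by
      intro x hx y hy hne
      rcases eq_or_ne x y with rfl | hxy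
      · exact absurd rfl hne
      rcases lt_or_ge δ (v (x - y)) with h | h
      · exact h
      · exact absurd (havgeq x hx y hy h) hne
    have havg_dist : ∀ x ∈ B, ∀ y ∈ B, avg x ≠ avg y → v (avg x - avg y) = v (x - y) := by
      intro x hx y hy hne
      have h := hdiffgroup x hx y hy hne
      have hsmall2 : v ((avg x - x) + (y - avg y)) < v (x - y) := by
        refine lt_of_le_of_lt (v.map_add_le ?_ ?_) h
        · rw [v.map_sub_swap]; exact havg_close x hx
        · rw [v.map_sub_swap]
          rw [v.map_sub_swap]
          exact havg_close y hy
      rw [show avg x - avg y = (x - y) + ((avg x - x) + (y - avg y)) by ring]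
      exact Valuation.map_add_eq_of_lt_left _ hsmall2
    -- the set of averages
    set B' := B.image avg with hB'def
    have hmemB' : ∀ x ∈ B, avg x ∈ B' := by
      intro x hx
      exact Finset.mem_image.2 ⟨x, hx, rfl⟩
    have hB'card : B'.card ≤ r := by
      have hlt : B'.card < B.card := by
        refine lt_of_le_of_ne Finset.card_image_le ?_
        intro heq
        have hinj := Finset.injOn_of_card_image_eq heq
        exact hpne (hinj hpB.1 hpB.2 (havgeq _ hpB.1 _ hpB.2 (le_of_eq hpδ)))
      omega
    have hdisj' : ∀ d ∈ B', ∀ d' ∈ B', d ≠ d' →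
        VBall v false d δ ∩ VBall v false d' δ = ∅ := by
      intro d hd d' hd' hne
      obtain ⟨x, hx, rfl⟩ := Finset.mem_image.1 hd
      obtain ⟨y, hy, rfl⟩ := Finset.mem_image.1 hd'
      have hgt : δ < v (avg x - avg y) := by
        rw [havg_dist x hx y hy hne]
        exact hdiffgroup x hx y hy hne
      apply Set.eq_empty_iff_forall_notMem.2
      rintro z ⟨hz1, hz2⟩
      rw [mem_vball_iff, sm_false] at hz1 hz2
      have h3 : v (avg x - avg y) ≤ δ := tri _ z _ (by rwa [v.map_sub_swap]) hz2
      exact absurd h3 (not_le.2 hgt)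
    obtain ⟨n', ν', IH1, IH2⟩ := ih false δ hδ0 B' hB'card hdisj'
    -- the parametrisation
    set f : K → K := fun x => if v (x - avg x) = δ then x - avg x else 0 with hfdef
    refine ⟨n' + 1, fun x => Fin.cons (f x) (ν' (avg x)), ?_, ?_⟩
    · -- injectivity
      intro c hc c' hc'
      constructor
      · intro h
        rcases eq_or_ne c c' with rfl | hne
        · rfl
        exfalso
        by_cases hg : v (c - c') ≤ δ
        · -- same group
          have hδeq : v (c - c') = δ := le_antisymm hg (hδle c hc c' hc' hne)
          have hav : avg c = avg c' := havgeq c hc c' hc' hg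
          have h0 := h 0
          simp only [Fin.cons_zero] at h0
          have hab : (c - avg c) - (c' - avg c') = c - c' := by rw [hav]; ring
          have hva : v (c - avg c) ≤ δ := havg_close c hc
          have hvb : v (c' - avg c') ≤ δ := havg_close c' hc'
          rw [hfdef] at h0
          simp only at h0
          by_cases hfa : v (c - avg c) = δ <;> by_cases hfb : v (c' - avg c') = δ
          · rw [if_pos hfa, if_pos hfb] at h0
            rcases h0 with heq | hlt
            · have : c - c' = 0 := by rw [← hab, heq, sub_self]
              exact hne (sub_eq_zero.1 this)
            · rw [hab, hδeq, hfa] at hlt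
              exact lt_irrefl _ hlt
          · rw [if_pos hfa, if_neg hfb] at h0
            rcases h0 with heq | hlt
            · rw [heq, map_zero] at hfa
              exact hδ0 hfa.symm
            · rw [sub_zero] at hlt
              exact lt_irrefl _ hlt
          · rw [if_neg hfa, if_pos hfb] at h0
            rcases h0 with heq | hlt
            · rw [← heq, map_zero] at hfb
              exact hδ0 hfb.symm
            · rw [zero_sub, v.map_neg, map_zero] at hlt
              exact absurd hlt (not_lt.2 zero_le')
          · have hlta : v (c - avg c) < δ := lt_of_le_of_ne hva hfa
            have hltb : v (c' - avg c') < δ := lt_of_le_of_ne hvb hfb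
            have : v (c - c') < δ := by
              rw [← hab]
              exact lt_of_le_of_lt (v.map_sub _ _) (max_lt hlta hltb)
            rw [hδeq] at this
            exact lt_irrefl _ this
        · -- different groups
          have hne' : avg c ≠ avg c' := fun he => hg (havg_inj c hc c' hc' he)
          have htail : ∀ j, RvEq v (ν' (avg c) j) (ν' (avg c') j) := by
            intro j
            have := h j.succ
            simpa only [Fin.cons_succ] using this
          have hball' := (IH1 _ (hmemB' c hc) _ (hmemB' c' hc')).1 htail
          have hsm := (vball_eq_iff hδ0).1 hball'
          rw [sm_false] at hsm
          have hgt : δ < v (avg c - avg c') := by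
            rw [havg_dist c hc c' hc' hne']
            exact hdiffgroup c hc c' hc' hne'
          rw [v.map_sub_swap] at hsm
          exact absurd hsm (not_le.2 hgt)
      · intro hball
        rcases eq_or_ne c c' with rfl | hne
        · intro j
          exact Or.inl rfl
        exact absurd ((vball_eq_iff hγ).1 hball) (hnsm c' hc' c hc hne.symm)
    · -- equivariance
      intro σ hσv hσB c hc c' hc' hball
      -- the induced permutation π of B
      have hπex : ∀ x : K, ∃ x',
          x ∈ B → (x' ∈ B ∧ VBall v op (σ x) γ = VBall v op x' γ) := by
        intro x
        by_cases hx : x ∈ B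
        · obtain ⟨x', hx', hb⟩ := hσB x hx
          exact ⟨x', fun _ => ⟨hx', hb⟩⟩
        · exact ⟨0, fun h => absurd h hx⟩
      choose π hπ using hπex
      have hπB : ∀ x ∈ B, π x ∈ B := fun x hx => (hπ x hx).1
      have hπsm : ∀ x ∈ B, Sm v op γ (π x - σ x) := fun x hx =>
        (vball_eq_iff hγ).1 (hπ x hx).2
      have hπinj : Set.InjOn π B := by
        intro x hx y hy hxy
        by_contra hne
        apply hnsm x hx y hy hne
        have h1 := sm_sub (hπsm x hx) (hπsm y hy)
        rw [hxy, show (π y - σ x) - (π y - σ y) = -(σ x - σ y) by ring] at h1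
        have h2 := sm_neg h1
        rw [neg_neg] at h2
        have h3 : v (x - y) = v (σ x - σ y) := by rw [← map_sub σ, hσv]
        exact sm_of_le (le_of_eq h3) h2
      have hπdist : ∀ x ∈ B, ∀ y ∈ B, v (π x - π y) = v (x - y) := by
        intro x hx y hy
        rcases eq_or_ne x y with rfl | hne
        · simp
        have hvs : v (σ x - σ y) = v (x - y) := by rw [← map_sub σ, hσv]
        have hpert : v ((π x - σ x) - (π y - σ y)) < v (σ x - σ y) := by
          rw [hvs]
          exact lt_of_lt_of_le (hsmδ _ (sm_sub (hπsm x hx) (hπsm y hy)))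
            (hδle x hx y hy hne)
        rw [show π x - π y = (σ x - σ y) + ((π x - σ x) - (π y - σ y)) by ring,
          Valuation.map_add_eq_of_lt_left _ hpert, hvs]
      have hπBim : B.image π = B := by
        refine Finset.eq_of_subset_of_card_le ?_ ?_
        · intro y hy
          obtain ⟨x, hx, rfl⟩ := Finset.mem_image.1 hy
          exact hπB x hx
        · rw [Finset.card_image_of_injOn hπinj]
      have hπGr : ∀ x ∈ B, (Gr x).image π = Gr (π x) := by
        intro x hx
        apply Finset.Subset.antisymm
        · intro y hy
          obtain ⟨w, hw, rfl⟩ := Finset.mem_image.1 hy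
          have hwB : w ∈ B := hGr_B x w hw
          rw [hGrdef]
          refine Finset.mem_filter.2 ⟨hπB w hwB, ?_⟩
          rw [hπdist x hx w hwB]
          exact hGr_sub x w hw
        · intro y hy
          have hyB : y ∈ B := hGr_B _ y hy
          have hyim : y ∈ B.image π := by rw [hπBim]; exact hyB
          obtain ⟨w, hw, rfl⟩ := Finset.mem_image.1 hyim
          refine Finset.mem_image.2 ⟨w, ?_, rfl⟩
          rw [hGrdef]
          refine Finset.mem_filter.2 ⟨hw, ?_⟩
          rw [← hπdist x hx w hw]
          exact hGr_sub _ _ hy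
      have hσavg : ∀ x ∈ B, Sm v op γ (avg (π x) - σ (avg x)) := by
        intro x hx
        have hsubB : ↑(Gr x) ⊆ (↑B : Set K) := fun z hz => hGr_B x z hz
        have hcardeq : (Gr (π x)).card = (Gr x).card := by
          rw [← hπGr x hx, Finset.card_image_of_injOn (hπinj.mono hsubB)]
        have hsum : ∑ z ∈ Gr (π x), z = ∑ w ∈ Gr x, π w := by
          rw [← hπGr x hx, Finset.sum_image]
          intro a ha b hb hab
          exact hπinj (hsubB ha) (hsubB hb) hab
        have hnum : avg (π x) - σ (avg x) =
            (∑ w ∈ Gr x, (π w - σ w)) / ((Gr x).card : K) := by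
          rw [havgdef]
          simp only
          rw [hcardeq, hsum, map_div₀, map_sum, map_natCast, Finset.sum_sub_distrib,
            sub_div]
        have hval : v (avg (π x) - σ (avg x)) = v (∑ w ∈ Gr x, (π w - σ w)) := by
          rw [hnum, v.map_div, hv1 _ (hGrpos x hx), div_one]
        refine sm_of_le (le_of_eq hval) ?_
        exact sm_sum hγ _ _ (fun w hw => hπsm w (hGr_B x w hw))
      -- c' is π c
      have hc'π : c' = π c := by
        by_contra hne
        apply hnsm c' hc' (π c) (hπB c hc) hne
        have h1 : Sm v op γ (c' - σ c) := (vball_eq_iff hγ).1 hball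
        have h2 := sm_sub h1 (hπsm c hc)
        rwa [show (c' - σ c) - (π c - σ c) = c' - π c by ring] at h2
      -- apply the induction hypothesis to σ on B'
      have hHσ' : ∀ d ∈ B', ∃ d' ∈ B', VBall v false (σ d) δ = VBall v false d' δ := by
        intro d hd
        obtain ⟨x, hx, rfl⟩ := Finset.mem_image.1 hd
        refine ⟨avg (π x), hmemB' _ (hπB x hx), ?_⟩
        rw [vball_eq_iff hδ0, sm_false]
        exact (hsmδ _ (hσavg x hx)).le
      have hballavg : VBall v false (σ (avg c)) δ = VBall v false (avg c') δ := by
        rw [hc'π, vball_eq_iff hδ0, sm_false]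
        exact (hsmδ _ (hσavg c hc)).le
      have htail := IH2 σ hσv hHσ' (avg c) (hmemB' c hc) (avg c') (hmemB' c' hc')
        hballavg
      intro j
      refine Fin.cases ?_ ?_ j
      · -- head coordinate
        simp only [Fin.cons_zero]
        have h1 : Sm v op γ (c' - σ c) := (vball_eq_iff hγ).1 hball
        have h2 : Sm v op γ (avg c' - σ (avg c)) := by
          rw [hc'π]
          exact hσavg c hc
        have hσa : σ (c - avg c) = σ c - σ (avg c) := map_sub σ _ _
        have hpert : Sm v op γ ((c' - avg c') - σ (c - avg c)) := by
          have h3 := sm_sub h1 h2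
          rwa [show (c' - σ c) - (avg c' - σ (avg c)) =
            (c' - avg c') - (σ c - σ (avg c)) by ring, ← hσa] at h3
        have hvlt : v ((c' - avg c') - σ (c - avg c)) < δ := hsmδ _ hpert
        have hva : v (c - avg c) ≤ δ := havg_close c hc
        have hva' : v (c' - avg c') ≤ δ := havg_close c' hc'
        have hvσa : v (σ (c - avg c)) = v (c - avg c) := hσv _
        rw [hfdef]
        simp only
        by_cases hfa : v (c - avg c) = δ
        · have hσaδ : v (σ (c - avg c)) = δ := hvσa.trans hfa
          have hfa' : v (c' - avg c') = δ := by
            rw [show c' - avg c' = σ (c - avg c) + ((c' - avg c') - σ (c - avg c))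
              by ring, Valuation.map_add_eq_of_lt_left _ (by rw [hσaδ]; exact hvlt),
              hσaδ]
          rw [if_pos hfa, if_pos hfa']
          right
          rw [hfa']
          exact hvlt
        · have hlta : v (c - avg c) < δ := lt_of_le_of_ne hva hfa
          have hfa' : v (c' - avg c') < δ := by
            rw [show c' - avg c' = σ (c - avg c) + ((c' - avg c') - σ (c - avg c))
              by ring]
            exact lt_of_le_of_lt (v.map_add _ _) (max_lt (hvσa ▸ hlta) hvlt)
          rw [if_neg hfa, if_neg (ne_of_lt hfa'), map_zero]
          exact Or.inl rfl
      · intro i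
        simp only [Fin.cons_succ]
        exact htail i


end Aux

/-- Canonical parametrisation of finite sets of balls by `RV`: for every `r > 0` there
is `m > 0` such that in any model of `ACVF₀,₀` (algebraically closed valued field of
equicharacteristic zero), for every set `B` of `r` pairwise disjoint balls of the same
radius `γ` and the same type (open or closed, given by `op`), if the enlarged balls of
`B[m]` (of radius `rad − v m`, here `γ * (v m)⁻¹`) are still pairwise disjoint, then
there is an injection of `B` into a finite power of `RV` which is definable over the
code of `B`: a map `ν` into tuples of leading terms which is constant exactly on the
equivalence classes "same ball" (well-definedness and injectivity), and which is
equivariant under every valuation-preserving automorphism stabilizing the set of balls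
`B` (definability over `⌜B⌝`). -/
theorem finite_ball_sets_parametrized_by_RV :
    ∀ r : ℕ, 0 < r → ∃ m : ℕ, 0 < m ∧
      ∀ (K Γ₀ : Type) [Field K] [LinearOrderedCommGroupWithZero Γ₀]
        (v : Valuation K Γ₀), IsAlgClosed K → CharZero K →
        (∀ k : ℕ, 0 < k → v (k : K) = 1) →
        ∀ (op : Bool) (γ : Γ₀), γ ≠ 0 →
        ∀ B : Finset K, B.card = r →
        (∀ c ∈ B, ∀ c' ∈ B, c ≠ c' → VBall v op c γ ∩ VBall v op c' γ = ∅) →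
        (∀ c ∈ B, ∀ c' ∈ B, c ≠ c' →
          VBall v op c (γ * (v (m : K))⁻¹) ∩ VBall v op c' (γ * (v (m : K))⁻¹) = ∅) →
        ∃ (n : ℕ) (ν : K → Fin n → K),
          (∀ c ∈ B, ∀ c' ∈ B,
            ((∀ j, RvEq v (ν c j) (ν c' j)) ↔ VBall v op c γ = VBall v op c' γ)) ∧
          (∀ σ : K ≃+* K, (∀ x : K, v (σ x) = v x) →
            (∀ c ∈ B, ∃ c' ∈ B, VBall v op (σ c) γ = VBall v op c' γ) →
            ∀ c ∈ B, ∀ c' ∈ B, VBall v op (σ c) γ = VBall v op c' γ →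
              ∀ j, RvEq v (ν c' j) (σ (ν c j))) := by
  intro r hr
  refine ⟨1, Nat.one_pos, ?_⟩
  intro K Γ₀ _ _ v _ _ hv1 op γ hγ B hB hdisj _
  exact aux_param v hv1 r op γ hγ B (le_of_eq hB) hdisj
end

section
/- In the theory of a pair (stably embedded sorts): let M be a saturated structure, D a stably embedded (ind-)definable set, and e, e' ∈ M with tp(e/D(M)) = tp(e'/D(M)). Then there is an automorphism σ of M fixing D(M) pointwise with σ(e) = e'. Consequently, if e is fixed by every automorphism of M over D(M), then e ∈ dcl(D(M)). -/
open FirstOrder Cardinal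

namespace StablyEmbeddedAut

variable (L : FirstOrder.Language.{0, 0}) (M : Type) [L.Structure M]

/-- `a` and `b` (tuples from `M`) have the same type over the parameter set `A`. -/
def SameTypeOver (A : Set M) {n : ℕ} (a b : Fin n → M) : Prop :=
  ∀ (m : ℕ) (c : Fin m → M), (∀ i, c i ∈ A) →
    ∀ φ : L.Formula (Fin n ⊕ Fin m),
      φ.Realize (Sum.elim a c) ↔ φ.Realize (Sum.elim b c)

/-- `M` is saturated (in its own cardinality): every finitely satisfiable set of
formulas in one free variable with parameters in a set of size `< #M` is realized. -/
def IsSaturatedStruct : Prop :=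
  ∀ A : Set M, #A < #M →
    ∀ p : Set (Σ m : ℕ, L.Formula (Fin (m + 1)) × (Fin m → M)),
      (∀ q ∈ p, ∀ i, q.2.2 i ∈ A) →
      (∀ s : Finset (Σ m : ℕ, L.Formula (Fin (m + 1)) × (Fin m → M)), ↑s ⊆ p →
        ∃ x : M, ∀ q ∈ s, q.2.1.Realize (Fin.cons x q.2.2)) →
      ∃ x : M, ∀ q ∈ p, q.2.1.Realize (Fin.cons x q.2.2)

/-- `D` is stably embedded (as a set of realizations of an (ind-)definable set):
for every tuple `a` there is a subset `E ⊆ D` of size at most `|L| + ℵ₀` such that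
`tp(a/E) ⊢ tp(a/D)`. -/
def StablyEmbeddedSet (D : Set M) : Prop :=
  ∀ (n : ℕ) (a : Fin n → M), ∃ E : Set M, E ⊆ D ∧ #E ≤ ℵ₀ + L.card ∧
    ∀ b : Fin n → M, SameTypeOver L M E a b → SameTypeOver L M D a b

/-- `e` is in the definable closure of `A`. -/
def InDcl (A : Set M) (e : M) : Prop :=
  ∃ (n : ℕ) (a : Fin n → M), (∀ i, a i ∈ A) ∧
    ∃ φ : L.Formula (Fin (n + 1)), φ.Realize (Fin.cons e a) ∧
      ∀ x : M, φ.Realize (Fin.cons x a) → x = e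

/-! Back and forth. Call a set `Γ` of pairs *elementary over `D`* if every finite tuple of
pairs from `Γ` has the same type over `D` on both sides. A small such `Γ` extends at any
point `x`: by stable embeddedness the types over `D` of the tuples from `x` and `dom Γ` are
already determined over some small `E ⊆ D`; adding the identity of `E` keeps `Γ` elementary,
and by saturation some `y` realizes the `Γ`-image of `tp(x / dom Γ ∪ E)`, which makes
`Γ ∪ {(x, y)}` elementary. Enumerating `M` in order type `|M|` and alternating forth and
back steps gives an elementary bijection over `D` containing `(e, e')`: an automorphism.
If `e ∉ dcl(D)`, then `e ∉ dcl(E)` for the `E` attached to `e`, so `tp(e/E) ∪ {x ≠ e}` is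
finitely satisfiable; a realization `b` has `tp(b/D) = tp(e/D)` and `b ≠ e`. -/

universe u

open FirstOrder.Language Set

section BackAndForth

variable {α ι : Type u} [LinearOrder ι] [WellFoundedLT ι]
  (Γ₀ : Set (α × α)) (enum : ι → α) (forth back : Set (α × α) → α → α)

def stepPairs (x : α) (q : α × α) : Set (α × α) := {(x, q.1), (q.2, x)}

def forthBack (Γ : Set (α × α)) (x : α) : α × α :=
  (forth Γ x, back (insert (x, forth Γ x) Γ) x)

/-- `(backForthSeq i).1` is the image and `(backForthSeq i).2` the preimage of `enum i`, chosen by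
`forth` and `back` from the pairs placed at the earlier steps. -/
noncomputable def backForthSeq : ι → α × α :=
  wellFounded_lt.fix fun i IH =>
    forthBack forth back (Γ₀ ∪ ⋃ j, ⋃ h : j < i, stepPairs (enum j) (IH j h)) (enum i)

def backForthUnion (s : Set ι) : Set (α × α) :=
  Γ₀ ∪ ⋃ j ∈ s, stepPairs (enum j) (backForthSeq Γ₀ enum forth back j)

theorem backForthSeq_eq (i : ι) :
    backForthSeq Γ₀ enum forth back i =
      forthBack forth back (backForthUnion Γ₀ enum forth back (Iio i)) (enum i) :=
  wellFounded_lt.fix_eq _ i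

variable {Γ₀ enum forth back}

theorem backForthUnion_mono {s t : Set ι} (h : s ⊆ t) :
    backForthUnion Γ₀ enum forth back s ⊆ backForthUnion Γ₀ enum forth back t :=
  union_subset_union_right _ (biUnion_subset_biUnion_left h)

theorem stepPairs_subset_backForthUnion {s : Set ι} {i : ι} (hi : i ∈ s) :
    stepPairs (enum i) (backForthSeq Γ₀ enum forth back i) ⊆ backForthUnion Γ₀ enum forth back s :=
  subset_union_of_subset_right (subset_biUnion_of_mem
    (u := fun j => stepPairs (enum j) (backForthSeq Γ₀ enum forth back j)) hi) _

theorem backForthUnion_Iic (i : ι) :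
    backForthUnion Γ₀ enum forth back (Iic i) = backForthUnion Γ₀ enum forth back (Iio i) ∪
      stepPairs (enum i) (backForthSeq Γ₀ enum forth back i) := by
  simp only [backForthUnion, ← Iio_insert, biUnion_insert]
  ac_rfl

theorem backForthUnion_eq_sUnion {s : Set ι} (hs : IsLowerSet s) :
    backForthUnion Γ₀ enum forth back s =
      ⋃₀ insert Γ₀ ((fun j => backForthUnion Γ₀ enum forth back (Iic j)) '' s) := by
  refine subset_antisymm (union_subset (subset_sUnion_of_mem (mem_insert _ _)) ?_) ?_
  · exact iUnion₂_subset fun j hj => (stepPairs_subset_backForthUnion self_mem_Iic).trans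
      (subset_sUnion_of_mem (mem_insert_of_mem _ ⟨j, hj, rfl⟩))
  · refine sUnion_subset (forall_mem_insert.2 ⟨subset_union_left, ?_⟩)
    rintro _ ⟨j, hj, rfl⟩
    exact backForthUnion_mono (hs.Iic_subset hj)

theorem mk_backForthUnion_Iio_lt (hα : ℵ₀ ≤ #α) (hΓ₀ : #Γ₀ < #α) (hι : ∀ i : ι, #(Iio i) < #α)
    (i : ι) : #(backForthUnion Γ₀ enum forth back (Iio i)) < #α := by
  refine (mk_union_le _ _).trans_lt (add_lt_of_lt hα hΓ₀ ?_)
  calc _ ≤ #(Iio i) * ⨆ j : Iio i, #(stepPairs (enum j) (backForthSeq Γ₀ enum forth back j)) :=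
        mk_biUnion_le (fun j => stepPairs (enum j) (backForthSeq Γ₀ enum forth back j)) _
    _ ≤ #(Iio i) * 2 :=
        mul_le_mul_right (ciSup_le' fun j => mk_insert_le.trans (by simp [one_add_one_eq_two])) _
    _ < #α := mul_lt_of_lt hα (hι i) (natCast_lt_aleph0.trans_le hα)

theorem backForthUnion_of_isLowerSet (Q : Set (α × α) → Prop)
    (hQ : ∀ c : Set (Set (α × α)), c.Nonempty → DirectedOn (· ⊆ ·) c → (∀ Γ ∈ c, Q Γ) → Q (⋃₀ c))
    (hQ₀ : Q Γ₀) {s : Set ι} (hs : IsLowerSet s)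
    (h : ∀ j ∈ s, Q (backForthUnion Γ₀ enum forth back (Iic j))) :
    Q (backForthUnion Γ₀ enum forth back s) := by
  rw [backForthUnion_eq_sUnion hs]
  have hmono : Monotone fun j => backForthUnion Γ₀ enum forth back (Iic j) :=
    fun _ _ hjk => backForthUnion_mono (Iic_subset_Iic.2 hjk)
  refine hQ _ (insert_nonempty _ _) ?_ (forall_mem_insert.2 ⟨hQ₀, forall_mem_image.2 h⟩)
  exact ((hmono.isChain_range.mono (image_subset_range _ _)).insert
    fun _ ⟨_, _, hb⟩ _ => Or.inl (hb ▸ subset_union_left)).directedOn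

end BackAndForth

theorem exists_total_of_forth_back {α : Type u} (hα : ℵ₀ ≤ #α) (Q : Set (α × α) → Prop)
    (hQ : ∀ c : Set (Set (α × α)), c.Nonempty → DirectedOn (· ⊆ ·) c → (∀ Γ ∈ c, Q Γ) → Q (⋃₀ c))
    {Γ₀ : Set (α × α)} (hΓ₀ : #Γ₀ < #α) (hQ₀ : Q Γ₀)
    (hforth : ∀ Γ, Γ₀ ⊆ Γ → Q Γ → #Γ < #α → ∀ x, ∃ y, Q (insert (x, y) Γ))
    (hback : ∀ Γ, Γ₀ ⊆ Γ → Q Γ → #Γ < #α → ∀ y, ∃ x, Q (insert (x, y) Γ)) :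
    ∃ Γ, Γ₀ ⊆ Γ ∧ Q Γ ∧ (∀ x, ∃ y, (x, y) ∈ Γ) ∧ ∀ y, ∃ x, (x, y) ∈ Γ := by
  have : Nonempty α := mk_ne_zero_iff.1 (aleph0_pos.trans_le hα).ne'
  -- enumerate `α` in order type `#α`, so that every proper initial segment is small
  obtain ⟨enum⟩ : Nonempty ((#α).ord.ToType ≃ α) := Cardinal.eq.1 (mk_ord_toType _)
  have hι : ∀ i : (#α).ord.ToType, #(Iio i) < #α := fun i => by simpa using mk_Iio_lt i
  let forth Γ x := Classical.epsilon fun y => Q (insert (x, y) Γ)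
  let back Γ y := Classical.epsilon fun x => Q (insert (x, y) Γ)
  let U := backForthUnion Γ₀ enum forth back
  have hstep : ∀ i, Q (U (Iic i)) := fun i => by
    induction i using WellFoundedLT.induction with | _ i ih =>
    have hlt : Q (U (Iio i)) := backForthUnion_of_isLowerSet Q hQ hQ₀ (isLowerSet_Iio i) ih
    have hc := mk_backForthUnion_Iio_lt (enum := enum) (forth := forth) (back := back) hα hΓ₀ hι i
    have hsub : Γ₀ ⊆ U (Iio i) := subset_union_left
    have h₁ := Classical.epsilon_spec (hforth _ hsub hlt hc (enum i))
    have h₂ := Classical.epsilon_spec (hback _ (hsub.trans (subset_insert _ _)) h₁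
      (mk_insert_le.trans_lt (add_lt_of_lt hα hc (one_lt_aleph0.trans_le hα))) (enum i))
    rw [show U (Iic i) = _ from backForthUnion_Iic i, backForthSeq_eq]
    convert h₂ using 1
    ext
    simp only [stepPairs, forthBack, mem_union, mem_insert_iff, mem_singleton_iff]
    tauto
  refine ⟨U univ, subset_union_left, backForthUnion_of_isLowerSet Q hQ hQ₀ isLowerSet_univ
    fun j _ => hstep j, fun x => ?_, fun y => ?_⟩
  · obtain ⟨i, rfl⟩ := enum.surjective x
    exact ⟨_, stepPairs_subset_backForthUnion (mem_univ i) (Or.inl rfl)⟩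
  · obtain ⟨i, rfl⟩ := enum.surjective y
    exact ⟨_, stepPairs_subset_backForthUnion (mem_univ i) (Or.inr rfl)⟩

theorem exists_mem_forall_imp_of_directed {β α : Type*} {R : β → α → Prop} {p : Set β}
    (hne : p.Nonempty) (hdir : ∀ q₁ ∈ p, ∀ q₂ ∈ p, ∃ q ∈ p, ∀ x, R q x → R q₁ x ∧ R q₂ x)
    (s : Finset β) (hs : ↑s ⊆ p) : ∃ q ∈ p, ∀ x, R q x → ∀ q' ∈ s, R q' x := by
  classical
  induction s using Finset.induction_on with
  | empty => exact hne.imp fun q hq => ⟨hq, by simp⟩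
  | insert q₁ s _ ih =>
    rw [Finset.coe_insert, insert_subset_iff] at hs
    obtain ⟨q₂, hq₂, h₂⟩ := ih hs.2
    obtain ⟨q, hq, h⟩ := hdir q₁ hs.1 q₂ hq₂
    exact ⟨q, hq, fun x hx => (Finset.forall_mem_insert _ _ _).2 ⟨(h x hx).1, h₂ x (h x hx).2⟩⟩

variable {L M} {A D : Set M} {n k : ℕ} {a b : Fin n → M}

theorem SameTypeOver.symm (h : SameTypeOver L M A a b) : SameTypeOver L M A b a :=
  fun m c hc φ => (h m c hc φ).symm

theorem SameTypeOver.mono {B : Set M} (h : SameTypeOver L M A a b) (hBA : B ⊆ A) :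
    SameTypeOver L M B a b := fun m c hc => h m c fun i => hBA (hc i)

theorem SameTypeOver.comp (h : SameTypeOver L M A a b) (r : Fin k → Fin n) :
    SameTypeOver L M A (a ∘ r) (b ∘ r) := fun m c hc φ => by
  simpa only [Formula.realize_relabel, Sum.elim_comp_map, Function.comp_id] using
    h m c hc (φ.relabel (Sum.map r id))

theorem SameTypeOver.append (h : SameTypeOver L M A a b) {d : Fin k → M} (hd : ∀ i, d i ∈ A) :
    SameTypeOver L M A (Fin.append a d) (Fin.append b d) := by
  intro m c hc φ
  -- the parameters `d` of the new tuples become parameters `Fin.append d c` of the old ones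
  let g : Fin (n + k) ⊕ Fin m → Fin n ⊕ Fin (k + m) :=
    Sum.elim (Fin.addCases Sum.inl (Sum.inr ∘ Fin.castAdd m)) (Sum.inr ∘ Fin.natAdd k)
  have hdc : ∀ i, Fin.append d c i ∈ A := Fin.addCases (by simpa using hd) (by simpa using hc)
  have hg : ∀ x : Fin n → M, Sum.elim x (Fin.append d c) ∘ g = Sum.elim (Fin.append x d) c := by
    intro x; ext (i | j)
    · induction i using Fin.addCases <;> simp [g]
    · simp [g]
  simpa only [Formula.realize_relabel, hg] using h (k + m) (Fin.append d c) hdc (φ.relabel g)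

theorem sameTypeOver_of_realize_imp
    (h : ∀ (m : ℕ) (c : Fin m → M), (∀ i, c i ∈ A) → ∀ φ : L.Formula (Fin n ⊕ Fin m),
      φ.Realize (Sum.elim a c) → φ.Realize (Sum.elim b c)) :
    SameTypeOver L M A a b := fun m c hc φ =>
  ⟨h m c hc φ, fun hb => by_contra fun ha => h m c hc φ.not ha hb⟩

theorem SameTypeOver.realize_iff (h : SameTypeOver L M A a b) (φ : L.Formula (Fin n)) :
    φ.Realize a ↔ φ.Realize b := by
  simpa [Formula.realize_relabel] using h 0 Fin.elim0 finZeroElim (φ.relabel Sum.inl)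

theorem SameTypeOver.eq_of_mem (h : SameTypeOver L M A a b) {i : Fin n} (hi : a i ∈ A) :
    b i = a i := by
  simpa using (h 1 ![a i] (by simpa using hi)
    ((Term.var (Sum.inl i)).equal (Term.var (Sum.inr 0)))).1 (by simp)

theorem SameTypeOver.exists_realize (h : SameTypeOver L M A a b) (χ : L.Formula (Fin (n + 1)))
    (ha : ∃ x, χ.Realize (Fin.cons x a)) : ∃ x, χ.Realize (Fin.cons x b) := by
  let Φ : L.Formula (Fin n ⊕ Fin 0) :=
    (χ.relabel (Fin.cons (Sum.inr 0) (Sum.inl ∘ Sum.inl))).iExs (Fin 1)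
  have hΦ (u : Fin n → M) : Φ.Realize (Sum.elim u finZeroElim) ↔ ∃ x, χ.Realize (Fin.cons x u) := by
    simp only [Φ, Formula.realize_iExs, Formula.realize_relabel]
    refine ⟨fun ⟨x, hx⟩ => ⟨x 0, ?_⟩, fun ⟨x, hx⟩ => ⟨fun _ => x, ?_⟩⟩ <;> convert hx using 2 <;>
      ext i <;> induction i using Fin.cases <;> simp
  exact (hΦ b).1 ((h 0 finZeroElim finZeroElim Φ).1 ((hΦ a).2 ha))

section Formulas

variable {k l m : ℕ}

def infAppend (φ : L.Formula (Fin (k + 1))) (ψ : L.Formula (Fin (l + 1))) :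
    L.Formula (Fin (k + l + 1)) :=
  φ.relabel (Fin.cons 0 (Fin.succ ∘ Fin.castAdd l)) ⊓
    ψ.relabel (Fin.cons 0 (Fin.succ ∘ Fin.natAdd k))

theorem realize_infAppend {φ : L.Formula (Fin (k + 1))} {ψ : L.Formula (Fin (l + 1))} {x : M}
    {c : Fin k → M} {d : Fin l → M} :
    (infAppend φ ψ).Realize (Fin.cons x (Fin.append c d)) ↔
      φ.Realize (Fin.cons x c) ∧ ψ.Realize (Fin.cons x d) := by
  simp only [infAppend, Formula.realize_inf, Formula.realize_relabel]
  congr! 2 <;> ext i <;> induction i using Fin.cases <;> simp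

def mergeParams (φ : L.Formula (Fin (n + 1) ⊕ Fin m)) : L.Formula (Fin (n + m + 1)) :=
  φ.relabel (Sum.elim (Fin.cons 0 (Fin.succ ∘ Fin.castAdd m)) (Fin.succ ∘ Fin.natAdd n))

theorem realize_mergeParams {φ : L.Formula (Fin (n + 1) ⊕ Fin m)} {x : M} {a : Fin n → M}
    {c : Fin m → M} :
    (mergeParams φ).Realize (Fin.cons x (Fin.append a c)) ↔
      φ.Realize (Sum.elim (Fin.cons x a) c) := by
  simp only [mergeParams, Formula.realize_relabel]
  congr! 1; ext (i | j)
  · induction i using Fin.cases <;> simp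
  · simp

end Formulas

variable (L M) in
abbrev ParamFormula := Σ m : ℕ, L.Formula (Fin (m + 1)) × (Fin m → M)

def ParamFormula.Realize (q : ParamFormula L M) (x : M) : Prop :=
  q.2.1.Realize (Fin.cons x q.2.2)

variable (L M) in
def IsElementaryOver (D : Set M) (Γ : Set (M × M)) : Prop :=
  ∀ (n : ℕ) (p : Fin n → M × M), (∀ i, p i ∈ Γ) →
    SameTypeOver L M D (fun i => (p i).1) (fun i => (p i).2)

namespace IsElementaryOver

variable {Γ : Set (M × M)} {γ : M × M}

theorem preimage_swap (hΓ : IsElementaryOver L M D Γ) :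
    IsElementaryOver L M D (Prod.swap ⁻¹' Γ) :=
  fun n p hp => (hΓ n (Prod.swap ∘ p) hp).symm

theorem realize_iff (hΓ : IsElementaryOver L M D Γ) {p : Fin n → M × M} (hp : ∀ i, p i ∈ Γ)
    (φ : L.Formula (Fin n)) : φ.Realize (fun i => (p i).1) ↔ φ.Realize (fun i => (p i).2) :=
  (hΓ n p hp).realize_iff φ

theorem eq_iff (hΓ : IsElementaryOver L M D Γ) {x y x' y' : M} (h : (x, y) ∈ Γ)
    (h' : (x', y') ∈ Γ) : x = x' ↔ y = y' := by
  simpa using hΓ.realize_iff (p := ![(x, y), (x', y')]) (by simp [Fin.forall_fin_two, h, h'])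
    ((Term.var 0).equal (Term.var 1))

theorem eq_of_mem (hΓ : IsElementaryOver L M D Γ) {d y : M} (h : (d, y) ∈ Γ) (hd : d ∈ D) :
    y = d :=
  (hΓ 1 ![(d, y)] (by simp [h])).eq_of_mem (i := 0) hd

theorem exists_equiv (hΓ : IsElementaryOver L M D Γ) (htot : ∀ x, ∃ y, (x, y) ∈ Γ)
    (hsurj : ∀ y, ∃ x, (x, y) ∈ Γ) : ∃ σ : L.Equiv M M, ∀ x, (x, σ x) ∈ Γ := by
  choose f hf using htot
  choose g hg using hsurj
  have hfun : ∀ {k} (F : L.Functions k) (v : Fin k → M),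
      f (Structure.funMap F v) = Structure.funMap F (f ∘ v) := fun {k} F v => by
    simpa [eq_comm, Function.comp_def] using hΓ.realize_iff
      (p := Fin.cons (_, f (Structure.funMap F v)) fun i => (v i, f (v i)))
      (Fin.cases (hf _) fun i => hf _)
      ((Term.func F fun i => Term.var i.succ).equal (Term.var 0))
  have hrel : ∀ {k} (R : L.Relations k) (v : Fin k → M),
      Structure.RelMap R (f ∘ v) ↔ Structure.RelMap R v := fun {k} R v => by
    simpa [iff_comm, Function.comp_def] using
      hΓ.realize_iff (p := fun i => (v i, f (v i))) (fun i => hf _) (R.formula fun i => Term.var i)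
  refine ⟨⟨⟨f, g, fun x => ?_, fun y => ?_⟩, fun {_} => hfun, fun {_} => hrel⟩, hf⟩
  · exact (hΓ.eq_iff (hg (f x)) (hf x)).2 rfl
  · exact (hΓ.eq_iff (hf (g y)) (hg y)).1 rfl

theorem union_image_diag (hΓ : IsElementaryOver L M D Γ) (hγ : γ ∈ Γ) {S : Set M} (hS : S ⊆ D) :
    IsElementaryOver L M D (Γ ∪ (fun x => (x, x)) '' S) := by
  classical
  intro n p hp
  by_cases hpΓ : ∀ i, p i ∈ Γ
  · exact hΓ n p hpΓ
  obtain ⟨i₀, hi₀⟩ := not_forall.1 hpΓ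
  have hdiag : ∀ i, p i ∉ Γ → (p i).1 ∈ S ∧ (p i).2 = (p i).1 := fun i hi => by
    obtain ⟨x, hx, hpx⟩ := (hp i).resolve_left hi
    simp [← hpx, hx]
  -- diagonal entries become parameters from `S`, the others are read off a tuple from `Γ`
  let a : Fin n → M × M := fun i => if p i ∈ Γ then p i else γ
  let d : Fin n → M := fun i => if p i ∈ Γ then (p i₀).1 else (p i).1
  let r : Fin n → Fin (n + n) := fun i => if p i ∈ Γ then Fin.castAdd n i else Fin.natAdd n i
  have ha : ∀ i, a i ∈ Γ := fun i => by by_cases h : p i ∈ Γ <;> simp [a, h, hγ]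
  have hd : ∀ i, d i ∈ D := fun i => hS <| by
    by_cases h : p i ∈ Γ
    · simpa [d, h] using (hdiag i₀ hi₀).1
    · simpa [d, h] using (hdiag i h).1
  convert ((hΓ n a ha).append hd).comp r using 1 <;> ext i <;> by_cases h : p i ∈ Γ
  · simp [a, r, h]
  · simp only [Function.comp_apply, r, d, if_neg h, Fin.append_right]
  · simp [a, r, h]
  · simp only [Function.comp_apply, r, d, if_neg h, Fin.append_right, (hdiag i h).2]

end IsElementaryOver

theorem isElementaryOver_singleton {x y : M} (h : SameTypeOver L M D ![x] ![y]) :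
    IsElementaryOver L M D {(x, y)} := fun n p hp => by
  convert h.comp (fun _ : Fin n => 0) using 1 <;> ext i <;> simp [mem_singleton_iff.1 (hp i)]

theorem isElementaryOver_sUnion {c : Set (Set (M × M))} (hne : c.Nonempty)
    (hc : DirectedOn (· ⊆ ·) c) (h : ∀ Γ ∈ c, IsElementaryOver L M D Γ) :
    IsElementaryOver L M D (⋃₀ c) := fun n p hp => by
  obtain ⟨Γ, hΓc, hpΓ⟩ :=
    hc.exists_mem_subset_of_finite_of_subset_sUnion hne (finite_range p) (range_subset_iff.2 hp)
  exact h Γ hΓc n p fun i => hpΓ (mem_range_self i)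

theorem isElementaryOver_insert {Γ : Set (M × M)} {γ : M × M} (hγ : γ ∈ Γ) {x y : M}
    (h : ∀ (n : ℕ) (p : Fin n → M × M), (∀ i, p i ∈ Γ) →
      SameTypeOver L M D (Fin.cons x fun i => (p i).1) (Fin.cons y fun i => (p i).2)) :
    IsElementaryOver L M D (insert (x, y) Γ) := by
  classical
  intro n p hp
  let a : Fin n → M × M := fun i => if p i ∈ Γ then p i else γ
  let r : Fin n → Fin (n + 1) := fun i => if p i ∈ Γ then i.succ else 0
  have ha : ∀ i, a i ∈ Γ := fun i => by by_cases h : p i ∈ Γ <;> simp [a, h, hγ]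
  have hxy : ∀ i, p i ∉ Γ → p i = (x, y) := fun i => (hp i).resolve_right
  convert (h n a ha).comp r using 1 <;> ext i <;> by_cases h : p i ∈ Γ <;>
    simp [a, r, h] <;> simp [hxy i h]

theorem StablyEmbeddedSet.exists_small (hse : StablyEmbeddedSet L M D)
    (hcard : ℵ₀ + L.card < #M) {A : Set M} (hA : #A < #M) :
    ∃ E ⊆ D, #E < #M ∧ ∀ (n : ℕ) (a b : Fin n → M), (∀ i, a i ∈ A) →
      SameTypeOver L M E a b → SameTypeOver L M D a b := by
  choose E hED hEcard hE using hse
  have hM : ℵ₀ ≤ #M := le_self_add.trans hcard.le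
  set κ := #A + (ℵ₀ + L.card)
  have hκ : ℵ₀ ≤ κ := le_self_add.trans le_add_self
  have hindex : #(Σ n, Fin n → A) ≤ κ := calc
    #(Σ n, Fin n → A) = #(List A) := mk_congr List.equivSigmaTuple.symm
    _ ≤ max ℵ₀ #A := mk_list_le_max A
    _ ≤ κ := max_le hκ le_self_add
  refine ⟨⋃ t : Σ n, Fin n → A, E t.1 (fun i => t.2 i), iUnion_subset fun t => hED _ _, ?_, ?_⟩
  · calc _ ≤ #(Σ n, Fin n → A) * ⨆ t : Σ n, Fin n → A, #(E t.1 fun i => t.2 i) := mk_iUnion_le _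
      _ ≤ κ * κ := mul_le_mul' hindex (ciSup_le' fun t => (hEcard _ _).trans le_add_self)
      _ = κ := mul_eq_self hκ
      _ < #M := add_lt_of_lt hM hA hcard
  · intro n a b ha hab
    exact hE n a b (hab.mono (subset_iUnion_of_subset ⟨n, fun i => ⟨a i, ha i⟩⟩ subset_rfl))

variable (L) in
/-- The image under `Γ` of the type of `x` over the first coordinates of `Γ`: all `φ(x; Γ c)` with
`φ(x; c)` true. -/
def imageType (Γ : Set (M × M)) (x : M) : Set (ParamFormula L M) :=
  {q | ∃ c : Fin q.1 → M, (∀ i, (c i, q.2.2 i) ∈ Γ) ∧ q.2.1.Realize (Fin.cons x c)}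

theorem IsElementaryOver.exists_realize_imageType {Γ : Set (M × M)}
    (hΓ : IsElementaryOver L M D Γ) (hsat : IsSaturatedStruct L M) (hΓc : #Γ < #M) (x : M) :
    ∃ y, ∀ q ∈ imageType L Γ x, q.Realize y := by
  have hdir : ∀ q₁ ∈ imageType L Γ x, ∀ q₂ ∈ imageType L Γ x, ∃ q ∈ imageType L Γ x,
      ∀ y, q.Realize y → q₁.Realize y ∧ q₂.Realize y := by
    rintro ⟨k, φ, c⟩ ⟨c', hc', hφ⟩ ⟨l, ψ, d⟩ ⟨d', hd', hψ⟩
    refine ⟨⟨k + l, infAppend φ ψ, Fin.append c d⟩,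
      ⟨Fin.append c' d', Fin.addCases (by simpa using hc') (by simpa using hd'), ?_⟩,
      fun y => realize_infAppend.1⟩
    exact realize_infAppend.2 ⟨hφ, hψ⟩
  have hsats : ∀ q ∈ imageType L Γ x, ∃ y, q.Realize y := by
    rintro ⟨k, φ, c⟩ ⟨c', hc', hφ⟩
    exact (hΓ k (fun i => (c' i, c i)) hc').exists_realize φ ⟨x, hφ⟩
  refine hsat (Prod.snd '' Γ) (mk_image_le.trans_lt hΓc) _ ?_ fun s hs => ?_
  · rintro ⟨k, φ, c⟩ ⟨c', hc', -⟩ i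
    exact ⟨_, hc' i, rfl⟩
  · have htop : (⟨0, ⊤, finZeroElim⟩ : ParamFormula L M) ∈ imageType L Γ x :=
      ⟨finZeroElim, finZeroElim, by simp⟩
    obtain ⟨q, hq, h⟩ := exists_mem_forall_imp_of_directed ⟨_, htop⟩ hdir s hs
    exact (hsats q hq).imp h

theorem IsElementaryOver.exists_insert_right {Γ : Set (M × M)} (hse : StablyEmbeddedSet L M D)
    (hsat : IsSaturatedStruct L M) (hcard : ℵ₀ + L.card < #M) (hΓ : IsElementaryOver L M D Γ)
    {γ : M × M} (hγ : γ ∈ Γ) (hΓc : #Γ < #M) (x : M) :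
    ∃ y, IsElementaryOver L M D (insert (x, y) Γ) := by
  have hM : ℵ₀ ≤ #M := le_self_add.trans hcard.le
  obtain ⟨E, hED, hEc, hE⟩ := hse.exists_small hcard (A := insert x (Prod.fst '' Γ))
    (mk_insert_le.trans_lt (add_lt_of_lt hM (mk_image_le.trans_lt hΓc) (one_lt_aleph0.trans_le hM)))
  obtain ⟨y, hy⟩ := (hΓ.union_image_diag hγ hED).exists_realize_imageType hsat
    (mk_union_le _ _ |>.trans_lt (add_lt_of_lt hM hΓc (mk_image_le.trans_lt hEc))) x
  refine ⟨y, isElementaryOver_insert hγ fun n p hp => ?_⟩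
  refine hE _ _ _ (Fin.cases (mem_insert _ _) fun i => mem_insert_of_mem _ ⟨_, hp i, rfl⟩) ?_
  refine sameTypeOver_of_realize_imp fun m c hc φ hφ => realize_mergeParams.1 ?_
  refine hy ⟨n + m, mergeParams φ, Fin.append (fun i => (p i).2) c⟩
    ⟨Fin.append (fun i => (p i).1) c, Fin.addCases (fun i => by simp [hp i])
      (fun j => by simp [hc j]), realize_mergeParams.2 hφ⟩

theorem IsElementaryOver.exists_insert_left {Γ : Set (M × M)} (hse : StablyEmbeddedSet L M D)
    (hsat : IsSaturatedStruct L M) (hcard : ℵ₀ + L.card < #M) (hΓ : IsElementaryOver L M D Γ)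
    {γ : M × M} (hγ : γ ∈ Γ) (hΓc : #Γ < #M) (y : M) :
    ∃ x, IsElementaryOver L M D (insert (x, y) Γ) := by
  obtain ⟨x, hx⟩ := hΓ.preimage_swap.exists_insert_right hse hsat hcard (γ := γ.swap) hγ
    ((mk_preimage_of_injective _ _ Prod.swap_injective).trans_lt hΓc) y
  refine ⟨x, ?_⟩
  convert hx.preimage_swap using 1
  ext ⟨u, v⟩
  simp [and_comm]

theorem exists_equiv_fixing_of_sameTypeOver (hse : StablyEmbeddedSet L M D)
    (hsat : IsSaturatedStruct L M) (hcard : ℵ₀ + L.card < #M) {e e' : M}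
    (htp : SameTypeOver L M D ![e] ![e']) :
    ∃ σ : L.Equiv M M, (∀ d ∈ D, σ d = d) ∧ σ e = e' := by
  have hM : ℵ₀ ≤ #M := le_self_add.trans hcard.le
  obtain ⟨Γ, hΓ₀, hΓ, htot, hsurj⟩ := exists_total_of_forth_back hM (IsElementaryOver L M D)
    (fun _ hne hc h => isElementaryOver_sUnion hne hc h)
    (by simpa using one_lt_aleph0.trans_le hM) (isElementaryOver_singleton htp)
    (fun _ h₀ hΓ hc => hΓ.exists_insert_right hse hsat hcard (h₀ rfl) hc)
    (fun _ h₀ hΓ hc => hΓ.exists_insert_left hse hsat hcard (h₀ rfl) hc)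
  obtain ⟨σ, hσ⟩ := hΓ.exists_equiv htot hsurj
  exact ⟨σ, fun d hd => hΓ.eq_of_mem (hσ d) hd, (hΓ.eq_iff (hσ e) (hΓ₀ rfl)).1 rfl⟩

theorem inDcl_of_forall_sameTypeOver_eq (hse : StablyEmbeddedSet L M D)
    (hsat : IsSaturatedStruct L M) (hcard : ℵ₀ + L.card < #M) {e : M}
    (h : ∀ b, SameTypeOver L M D ![e] ![b] → b = e) : InDcl L M D e := by
  classical
  have hM : ℵ₀ ≤ #M := le_self_add.trans hcard.le
  obtain ⟨E, hED, hEc, hE⟩ := hse 1 ![e]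
  by_contra hdcl
  let p₀ : Set (ParamFormula L M) := {q | (∀ i, q.2.2 i ∈ E) ∧ q.Realize e}
  let neq : ParamFormula L M := ⟨1, ∼((Term.var 0).equal (Term.var 1)), ![e]⟩
  have hdir : ∀ q₁ ∈ p₀, ∀ q₂ ∈ p₀, ∃ q ∈ p₀, ∀ x, q.Realize x → q₁.Realize x ∧ q₂.Realize x := by
    rintro ⟨k, φ, c⟩ ⟨hc, hφ⟩ ⟨l, ψ, d⟩ ⟨hd, hψ⟩
    exact ⟨⟨k + l, infAppend φ ψ, Fin.append c d⟩,
      ⟨Fin.addCases (by simpa using hc) (by simpa using hd), realize_infAppend.2 ⟨hφ, hψ⟩⟩,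
      fun x => realize_infAppend.1⟩
  have hother : ∀ q ∈ p₀, ∃ x ≠ e, q.Realize x := by
    rintro ⟨k, φ, c⟩ ⟨hc, hφ⟩
    by_contra! hx
    exact hdcl ⟨k, c, fun i => hED (hc i), φ, hφ, fun x hx' => by_contra fun hne => hx x hne hx'⟩
  have htop : (⟨0, ⊤, ![]⟩ : ParamFormula L M) ∈ p₀ := ⟨finZeroElim, by simp [ParamFormula.Realize]⟩
  have hparams : ∀ q ∈ insert neq p₀, ∀ i, q.2.2 i ∈ insert e E := by
    rintro q (rfl | hq) i
    · simp [neq]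
    · exact mem_insert_of_mem _ (hq.1 i)
  have hfin : ∀ s : Finset (ParamFormula L M), ↑s ⊆ insert neq p₀ →
      ∃ x, ∀ q ∈ s, q.Realize x := by
    intro s hs
    obtain ⟨q, hq, hqs⟩ := exists_mem_forall_imp_of_directed ⟨_, htop⟩ hdir (s.erase neq)
      fun q hq' => (hs (Finset.mem_of_mem_erase hq')).resolve_left (Finset.ne_of_mem_erase hq')
    obtain ⟨x, hxe, hx⟩ := hother q hq
    refine ⟨x, fun q' hq' => ?_⟩
    by_cases h' : q' = neq
    · subst h'
      simpa [neq, ParamFormula.Realize] using hxe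
    · exact hqs x hx q' (Finset.mem_erase.2 ⟨h', hq'⟩)
  obtain ⟨b, hb⟩ := hsat (insert e E)
    (mk_insert_le.trans_lt (add_lt_of_lt hM (hEc.trans_lt hcard) (one_lt_aleph0.trans_le hM)))
    (insert neq p₀) hparams hfin
  have hbe : b ≠ e := by simpa [neq, ParamFormula.Realize] using hb neq (mem_insert _ _)
  refine hbe (h b (hE ![b] (sameTypeOver_of_realize_imp fun m c hc φ hφ => ?_)))
  have hcE : ∀ i, Fin.append ![] c i ∈ E :=
    Fin.addCases finZeroElim (by simpa only [Fin.append_right] using hc)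
  exact realize_mergeParams.1 (hb ⟨0 + m, mergeParams φ, Fin.append ![] c⟩
    (mem_insert_of_mem _ ⟨hcE, realize_mergeParams.2 hφ⟩))

variable (L M) in
/-- Let `M` be a saturated structure (of cardinality `> |L| + ℵ₀`), `D` a stably
embedded (ind-)definable set, and `e, e' ∈ M` with `tp(e/D(M)) = tp(e'/D(M))`.  Then
some automorphism of `M` fixing `D(M)` pointwise maps `e` to `e'`; consequently, if `e`
is fixed by every automorphism of `M` over `D(M)`, then `e ∈ dcl(D(M))`. -/
theorem aut_over_stably_embedded (D : Set M) (hse : StablyEmbeddedSet L M D)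
    (hsat : IsSaturatedStruct L M) (hcard : ℵ₀ + L.card < #M)
    (e e' : M) (htp : SameTypeOver L M D ![e] ![e']) :
    (∃ σ : L.Equiv M M, (∀ d ∈ D, σ d = d) ∧ σ e = e') ∧
    ((∀ σ : L.Equiv M M, (∀ d ∈ D, σ d = d) → σ e = e) → InDcl L M D e) := by
  refine ⟨exists_equiv_fixing_of_sameTypeOver hse hsat hcard htp, fun hfix => ?_⟩
  refine inDcl_of_forall_sameTypeOver_eq hse hsat hcard fun b hb => ?_
  obtain ⟨σ, hσD, rfl⟩ := exists_equiv_fixing_of_sameTypeOver hse hsat hcard hb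
  exact hfix σ hσD

end StablyEmbeddedAut
end

section
/- Let D and C be stably embedded, orthogonal (every definable subset of D^m × C^n is a finite union of rectangles Y × Z with Y ⊆ D^m, Z ⊆ C^n definable) definable sets such that both D and C, with their induced structures, weakly eliminate imaginaries. Then D ∪ C weakly eliminates imaginaries: every definable X ⊆ D^m × C^n is definable over D(acl^eq(⌜X⌝)) ∪ C(acl^eq(⌜X⌝)). -/
/-!
By orthogonality `X ⊆ D^m × C^n` is a finite union of rectangles, so it has only finitely many
fibres `X_z ⊆ D^m`, and `X` is the union of the rectangles `X_z × {z' | X_z' = X_z}` over the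
nonempty fibres. Each fibre is weakly coded in `D` and each fibre class `{z' | X_z' = X_z}`
(a definable subset of `C^n`) in `C`. An automorphism fixing `X` permutes the finitely many fibres
and fibre classes, so their codes are algebraic over `⌜X⌝`, and then so are the parameters coding
them.
-/
open FirstOrder Cardinal

namespace WeakEIOrth

variable (L : FirstOrder.Language.{0, 0}) (M : Type) [L.Structure M]

/-- `X` is definable with the parameter tuple `a`. -/
def DefWith {α : Type} {k : ℕ} (a : Fin k → M) (X : Set (α → M)) : Prop :=
  ∃ φ : L.Formula (α ⊕ Fin k), X = {x | φ.Realize (Sum.elim x a)}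

/-- `X` is definable (with some parameters). -/
def IsDef {α : Type} (X : Set (α → M)) : Prop :=
  ∃ (k : ℕ) (a : Fin k → M), DefWith L M a X

/-- The automorphism `σ` stabilizes the set `X` of tuples setwise (i.e. `σ` fixes the
code `⌜X⌝`). -/
def FixesSet {α : Type} (σ : L.Equiv M M) (X : Set (α → M)) : Prop :=
  ∀ x : α → M, x ∈ X ↔ (⇑σ ∘ x) ∈ X

/-- `X` is definable over `S`-points of `acl^eq(⌜X⌝)`: there is a tuple `a` from `S`
over which `X` is definable and whose orbit under the automorphisms stabilizing `X`
setwise is finite. -/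
def WeakCoded {α : Type} (X : Set (α → M)) (S : Set M) : Prop :=
  ∃ (k : ℕ) (a : Fin k → M), (∀ i, a i ∈ S) ∧ DefWith L M a X ∧
    Set.Finite {b : Fin k → M | ∃ σ : L.Equiv M M, FixesSet L M σ X ∧ b = ⇑σ ∘ a}

/-- `M` is saturated (in its own cardinality). -/
def IsSaturatedStruct : Prop :=
  ∀ A : Set M, #A < #M →
    ∀ p : Set (Σ m : ℕ, L.Formula (Fin (m + 1)) × (Fin m → M)),
      (∀ q ∈ p, ∀ i, q.2.2 i ∈ A) →
      (∀ s : Finset (Σ m : ℕ, L.Formula (Fin (m + 1)) × (Fin m → M)), ↑s ⊆ p →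
        ∃ x : M, ∀ q ∈ s, q.2.1.Realize (Fin.cons x q.2.2)) →
      ∃ x : M, ∀ q ∈ p, q.2.1.Realize (Fin.cons x q.2.2)

/-- `M` is strongly homogeneous (in its own cardinality): every partial elementary map
with small domain extends to an automorphism. -/
def IsStronglyHomog : Prop :=
  ∀ (A : Set M) (f : M → M), #A < #M →
    (∀ (n : ℕ) (a : Fin n → M), (∀ i, a i ∈ A) →
      ∀ φ : L.Formula (Fin n), φ.Realize a ↔ φ.Realize (f ∘ a)) →
    ∃ σ : L.Equiv M M, ∀ x ∈ A, σ x = f x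

section Definability

variable {L : FirstOrder.Language.{0, 0}} {M : Type} [L.Structure M] {α β γ : Type}
  {P : Set M}

open Language

variable (L) in
def DefOver (P : Set M) (X : Set (α → M)) : Prop :=
  ∃ (k : ℕ) (a : Fin k → M), (∀ i, a i ∈ P) ∧ DefWith L M a X

theorem isDef_iff_defOver_univ {X : Set (α → M)} : IsDef L M X ↔ DefOver L Set.univ X := by
  simp [IsDef, DefOver]

theorem DefOver.mono {Q : Set M} {X : Set (α → M)} (hX : DefOver L P X) (hPQ : P ⊆ Q) :
    DefOver L Q X :=
  let ⟨k, a, ha, haX⟩ := hX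
  ⟨k, a, fun i => hPQ (ha i), haX⟩

theorem defOver_setOf_realize [Finite β] (φ : L.Formula (α ⊕ β)) {b : β → M}
    (hb : ∀ i, b i ∈ P) : DefOver L P {x | φ.Realize (Sum.elim x b)} := by
  obtain ⟨k, ⟨e⟩⟩ := Finite.exists_equiv_fin β
  refine ⟨k, b ∘ e.symm, fun i => hb _, φ.relabel (Sum.map id e), ?_⟩
  ext x
  simp only [Set.mem_ofPred_eq, Formula.realize_relabel, Sum.elim_comp_map, Function.comp_id,
    Function.comp_assoc, Equiv.symm_comp_self]

theorem DefWith.append_left {k l : ℕ} {a : Fin k → M} {X : Set (α → M)} (hX : DefWith L M a X)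
    (b : Fin l → M) : DefWith L M (Fin.append a b) X := by
  obtain ⟨φ, rfl⟩ := hX
  refine ⟨φ.relabel (Sum.map id (Fin.castAdd l)), ?_⟩
  ext x
  simp only [Set.mem_ofPred_eq, Formula.realize_relabel, Sum.elim_comp_map, Function.comp_id]
  exact Iff.of_eq (congrArg _ (congrArg _ (funext fun i => (Fin.append_left a b i).symm)))

theorem DefWith.append_right {k l : ℕ} {b : Fin l → M} {X : Set (α → M)} (hX : DefWith L M b X)
    (a : Fin k → M) : DefWith L M (Fin.append a b) X := by
  obtain ⟨φ, rfl⟩ := hX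
  refine ⟨φ.relabel (Sum.map id (Fin.natAdd k)), ?_⟩
  ext x
  simp only [Set.mem_ofPred_eq, Formula.realize_relabel, Sum.elim_comp_map, Function.comp_id]
  exact Iff.of_eq (congrArg _ (congrArg _ (funext fun i => (Fin.append_right a b i).symm)))

theorem DefOver.exists_defWith_common {X Y : Set (α → M)} (hX : DefOver L P X)
    (hY : DefOver L P Y) :
    ∃ (k : ℕ) (a : Fin k → M), (∀ i, a i ∈ P) ∧ DefWith L M a X ∧ DefWith L M a Y := by
  obtain ⟨k, a, ha, haX⟩ := hX
  obtain ⟨l, b, hb, hbY⟩ := hY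
  exact ⟨k + l, Fin.append a b, Fin.addCases (by simpa using ha) (by simpa using hb),
    haX.append_left b, hbY.append_right a⟩

theorem DefOver.inter {X Y : Set (α → M)} (hX : DefOver L P X) (hY : DefOver L P Y) :
    DefOver L P (X ∩ Y) := by
  obtain ⟨k, a, ha, ⟨φ, rfl⟩, ⟨ψ, rfl⟩⟩ := hX.exists_defWith_common hY
  exact ⟨k, a, ha, φ ⊓ ψ, by ext; simp⟩

theorem DefOver.iff {X Y : Set (α → M)} (hX : DefOver L P X) (hY : DefOver L P Y) :
    DefOver L P {x | x ∈ X ↔ x ∈ Y} := by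
  obtain ⟨k, a, ha, ⟨φ, rfl⟩, ⟨ψ, rfl⟩⟩ := hX.exists_defWith_common hY
  exact ⟨k, a, ha, φ.iff ψ, by ext; simp⟩

theorem DefOver.iUnion {J : Type} [Finite J] {X : J → Set (α → M)}
    (hX : ∀ j, DefOver L P (X j)) : DefOver L P (⋃ j, X j) := by
  choose k a ha φ hφ using hX
  convert defOver_setOf_realize (L := L)
    (Formula.iSup fun j => (φ j).relabel (Sum.map id (Sigma.mk j)))
    (b := fun p : Σ j, Fin (k j) => a p.1 p.2) fun p => ha p.1 p.2
  ext x
  simp only [Set.mem_iUnion, hφ, Set.mem_ofPred_eq, Formula.realize_iSup, Formula.realize_relabel,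
    Sum.elim_comp_map, Function.comp_id]
  rfl

theorem DefOver.biUnion {I : Type} {s : Set I} (hs : s.Finite) {X : I → Set (α → M)}
    (hX : ∀ i ∈ s, DefOver L P (X i)) : DefOver L P (⋃ i ∈ s, X i) := by
  have := hs.to_subtype
  rw [Set.biUnion_eq_iUnion]
  exact DefOver.iUnion fun i => hX i i.2

theorem DefOver.preimage_comp {Y : Set (α → M)} (hY : DefOver L P Y) (f : α → β) :
    DefOver L P {w | w ∘ f ∈ Y} := by
  obtain ⟨k, a, ha, φ, rfl⟩ := hY
  exact ⟨k, a, ha, φ.relabel (Sum.map f id), by ext; simp [Sum.elim_comp_map]⟩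

theorem DefOver.rectangle {Y : Set (α → M)} {Z : Set (β → M)} (hY : DefOver L P Y)
    (hZ : DefOver L P Z) : DefOver L P {w | w ∘ Sum.inl ∈ Y ∧ w ∘ Sum.inr ∈ Z} :=
  (hY.preimage_comp Sum.inl).inter (hZ.preimage_comp Sum.inr)

theorem DefOver.forall [Finite γ] {W : Set (γ ⊕ β → M)} (hW : DefOver L P W) :
    DefOver L P {z : β → M | ∀ y : γ → M, Sum.elim y z ∈ W} := by
  obtain ⟨k, a, ha, φ, rfl⟩ := hW
  let g : (γ ⊕ β) ⊕ Fin k → (β ⊕ Fin k) ⊕ γ :=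
    Sum.elim (Sum.elim Sum.inr (Sum.inl ∘ Sum.inl)) (Sum.inl ∘ Sum.inr)
  refine ⟨k, a, ha, (φ.relabel g).iAlls γ, ?_⟩
  ext z
  simp only [Set.mem_ofPred_eq, Formula.realize_iAlls, Formula.realize_relabel]
  refine forall_congr' fun y => Iff.of_eq (congrArg _ ?_)
  funext i
  rcases i with (i | i) | i <;> rfl

end Definability

section Orbits

variable {L : FirstOrder.Language.{0, 0}} {M : Type} [L.Structure M] {α β : Type}

def autImage (σ : L.Equiv M M) (T : Set (α → M)) : Set (α → M) :=
  {y | ⇑σ.symm ∘ y ∈ T}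

variable (L) in
/-- The points of `M` lying in `acl^eq(⌜X⌝)`. -/
def aclCode (X : Set (α → M)) : Set M :=
  {c | {d | ∃ σ : L.Equiv M M, FixesSet L M σ X ∧ d = σ c}.Finite}

theorem comp_mem_autImage_iff (σ : L.Equiv M M) (T : Set (α → M)) (x : α → M) :
    ⇑σ ∘ x ∈ autImage σ T ↔ x ∈ T := by
  simp [autImage, Function.comp_def]

theorem FixesSet.symm {σ : L.Equiv M M} {T : Set (α → M)} (hσ : FixesSet L M σ T) :
    FixesSet L M σ.symm T := fun x => by
  simpa [Function.comp_def] using (hσ (⇑σ.symm ∘ x)).symm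

theorem fixesSet_symm_comp_of_autImage_eq {σ τ : L.Equiv M M} {T : Set (α → M)}
    (h : autImage σ T = autImage τ T) : FixesSet L M (τ.symm.comp σ) T := fun x => by
  rw [← comp_mem_autImage_iff σ, h, autImage, Set.mem_ofPred_eq]
  rfl

theorem finite_orbit_iff_forall_mem_aclCode [Finite β] (X : Set (α → M)) (a : β → M) :
    {b | ∃ σ : L.Equiv M M, FixesSet L M σ X ∧ b = ⇑σ ∘ a}.Finite ↔ ∀ i, a i ∈ aclCode L X := by
  constructor
  · intro h i
    refine (h.image fun b => b i).subset ?_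
    rintro _ ⟨σ, hσ, rfl⟩
    exact ⟨_, ⟨σ, hσ, rfl⟩, rfl⟩
  · intro h
    refine (Set.Finite.pi (t := fun i => {d | ∃ σ : L.Equiv M M, FixesSet L M σ X ∧ d = σ (a i)})
      fun i => h i).subset ?_
    rintro _ ⟨σ, hσ, rfl⟩ i -
    exact ⟨σ, hσ, rfl⟩

theorem weakCoded_iff_defOver {X : Set (α → M)} {S : Set M} :
    WeakCoded L M X S ↔ DefOver L (S ∩ aclCode L X) X := by
  simp only [WeakCoded, DefOver, finite_orbit_iff_forall_mem_aclCode, Set.mem_inter_iff,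
    forall_and]
  tauto

/-- Transitivity of `acl^eq`: if `⌜T⌝` is algebraic over `⌜X⌝`, then
`acl^eq(⌜T⌝) ⊆ acl^eq(⌜X⌝)`. -/
theorem aclCode_subset_of_finite_autImage {X : Set (α → M)} {T : Set (β → M)}
    (hT : {U | ∃ σ : L.Equiv M M, FixesSet L M σ X ∧ U = autImage σ T}.Finite) :
    aclCode L T ⊆ aclCode L X := by
  intro c hc
  let orbitVia (U : Set (β → M)) : Set M :=
    {d | ∃ σ : L.Equiv M M, autImage σ T = U ∧ d = σ c}
  have hOrbitVia : ∀ U, (orbitVia U).Finite := by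
    intro U
    rcases Set.eq_empty_or_nonempty (orbitVia U) with hU | ⟨_, τ, hτ, -⟩
    · exact hU ▸ Set.finite_empty
    refine (hc.image τ).subset ?_
    rintro _ ⟨σ, hσ, rfl⟩
    exact ⟨(τ.symm.comp σ) c, ⟨_, fixesSet_symm_comp_of_autImage_eq (hσ.trans hτ.symm), rfl⟩,
      by simp⟩
  refine (hT.biUnion fun U _ => hOrbitVia U).subset ?_
  rintro _ ⟨σ, hσ, rfl⟩
  exact Set.mem_biUnion ⟨σ, hσ, rfl⟩ ⟨σ, rfl, rfl⟩

end Orbits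

section Fibers

variable {L : FirstOrder.Language.{0, 0}} {M : Type} [L.Structure M] {α β ι : Type}
  {P : Set M}

open Language

def fiber (X : Set (α ⊕ β → M)) (z : β → M) : Set (α → M) :=
  {y | Sum.elim y z ∈ X}

def fiberClass (X : Set (α ⊕ β → M)) (S : Set (α → M)) : Set (β → M) :=
  {z | fiber X z = S}

theorem DefOver.fiber [Finite β] {X : Set (α ⊕ β → M)} (hX : DefOver L P X) {z : β → M}
    (hz : ∀ i, z i ∈ P) : DefOver L P (fiber X z) := by
  obtain ⟨k, a, ha, φ, rfl⟩ := hX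
  convert defOver_setOf_realize (L := L) (φ.relabel (Equiv.sumAssoc α β (Fin k)))
    (b := Sum.elim z a) (by rintro (i | i); exacts [hz i, ha i])
  ext y
  simp only [WeakEIOrth.fiber, Set.mem_ofPred_eq, Formula.realize_relabel]
  refine Iff.of_eq (congrArg _ (funext ?_))
  rintro ((i | i) | i) <;> rfl

theorem DefOver.fiberClass [Finite α] {X : Set (α ⊕ β → M)} (hX : DefOver L P X)
    {S : Set (α → M)} (hS : DefOver L P S) : DefOver L P (fiberClass X S) := by
  convert (hX.iff (hS.preimage_comp Sum.inl)).forall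
  simp only [WeakEIOrth.fiberClass, WeakEIOrth.fiber, Set.ext_iff, Set.mem_ofPred_eq,
    Sum.elim_comp_inl]

theorem isDef_fiber [Finite β] {X : Set (α ⊕ β → M)} (hX : IsDef L M X) (z : β → M) :
    IsDef L M (fiber X z) := by
  rw [isDef_iff_defOver_univ] at hX ⊢
  exact hX.fiber fun _ => trivial

theorem isDef_fiberClass [Finite α] {X : Set (α ⊕ β → M)} (hX : IsDef L M X)
    {S : Set (α → M)} (hS : IsDef L M S) : IsDef L M (fiberClass X S) := by
  rw [isDef_iff_defOver_univ] at hX hS ⊢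
  exact hX.fiberClass hS

theorem eq_biUnion_fiber_rectangles (X : Set (α ⊕ β → M)) :
    X = ⋃ S ∈ fiber X '' {z | (fiber X z).Nonempty},
      {w | w ∘ Sum.inl ∈ S ∧ w ∘ Sum.inr ∈ fiberClass X S} := by
  ext w
  simp only [Set.mem_iUnion, Set.mem_image, Set.mem_ofPred_eq, exists_prop]
  constructor
  · intro hw
    have hw' : w ∘ Sum.inl ∈ fiber X (w ∘ Sum.inr) := by
      simpa [WeakEIOrth.fiber] using hw
    exact ⟨_, ⟨_, ⟨_, hw'⟩, rfl⟩, hw', rfl⟩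
  · rintro ⟨S, -, hS, hwS⟩
    rw [fiberClass, Set.mem_ofPred_eq] at hwS
    simpa [WeakEIOrth.fiber, ← hwS] using hS

theorem defOver_of_fibers {X : Set (α ⊕ β → M)} (hfin : (Set.range (fiber X)).Finite)
    (h : ∀ z, (fiber X z).Nonempty →
      DefOver L P (fiber X z) ∧ DefOver L P (fiberClass X (fiber X z))) :
    DefOver L P X := by
  rw [eq_biUnion_fiber_rectangles X]
  refine DefOver.biUnion (hfin.subset (Set.image_subset_range _ _)) ?_
  rintro _ ⟨z, hz, rfl⟩
  exact (h z hz).1.rectangle (h z hz).2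

theorem finite_range_fiber [Finite ι] {X : Set (α ⊕ β → M)} {Y : ι → Set (α → M)}
    {Z : ι → Set (β → M)} (hX : X = {w | ∃ i, w ∘ Sum.inl ∈ Y i ∧ w ∘ Sum.inr ∈ Z i}) :
    (Set.range (fiber X)).Finite := by
  refine (Set.finite_range fun s : Set ι => ⋃ i ∈ s, Y i).subset ?_
  rintro _ ⟨z, rfl⟩
  refine ⟨{i | z ∈ Z i}, ?_⟩
  ext y
  simp [WeakEIOrth.fiber, hX, and_comm]

end Fibers

section FiberOrbits

variable {L : FirstOrder.Language.{0, 0}} {M : Type} [L.Structure M] {α β : Type}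
  {X : Set (α ⊕ β → M)} {σ : L.Equiv M M}

theorem autImage_fiber (hσ : FixesSet L M σ X) (z : β → M) :
    autImage σ (fiber X z) = fiber X (⇑σ ∘ z) := by
  ext y
  simp only [autImage, fiber, Set.mem_ofPred_eq]
  rw [hσ, Sum.comp_elim, ← Function.comp_assoc]
  simp [Function.comp_def]

theorem autImage_fiberClass_fiber (hσ : FixesSet L M σ X) (z : β → M) :
    autImage σ (fiberClass X (fiber X z)) = fiberClass X (fiber X (⇑σ ∘ z)) := by
  have transport : ∀ τ : L.Equiv M M, FixesSet L M τ X → ∀ u v : β → M,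
      fiber X u = fiber X v → fiber X (⇑τ ∘ u) = fiber X (⇑τ ∘ v) := fun τ hτ u v h => by
    rw [← autImage_fiber hτ, h, autImage_fiber hτ]
  ext w
  simp only [autImage, fiberClass, Set.mem_ofPred_eq]
  constructor
  · intro h
    simpa [Function.comp_def] using transport σ hσ _ _ h
  · intro h
    simpa [Function.comp_def] using transport σ.symm hσ.symm _ _ h

theorem aclCode_fiber_subset (hfin : (Set.range (fiber X)).Finite) (z : β → M) :
    aclCode L (fiber X z) ⊆ aclCode L X :=
  aclCode_subset_of_finite_autImage <| hfin.subset <| by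
    rintro _ ⟨σ, hσ, rfl⟩
    exact ⟨_, (autImage_fiber hσ z).symm⟩

theorem aclCode_fiberClass_fiber_subset (hfin : (Set.range (fiber X)).Finite) (z : β → M) :
    aclCode L (fiberClass X (fiber X z)) ⊆ aclCode L X :=
  aclCode_subset_of_finite_autImage <| (hfin.image (fiberClass X)).subset <| by
    rintro _ ⟨σ, hσ, rfl⟩
    exact ⟨_, ⟨_, rfl⟩, (autImage_fiberClass_fiber hσ z).symm⟩

end FiberOrbits

theorem weak_EI_union_orthogonal (D C : Set M)
    -- `D` and `C` are orthogonal: every definable subset of `D^m × C^n` is a finite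
    -- union of rectangles
    (horth : ∀ (m n : ℕ) (X : Set ((Fin m ⊕ Fin n) → M)), IsDef L M X →
      (∀ w ∈ X, (∀ i, w (Sum.inl i) ∈ D) ∧ (∀ j, w (Sum.inr j) ∈ C)) →
      ∃ (N : ℕ) (Y : Fin N → Set (Fin m → M)) (Z : Fin N → Set (Fin n → M)),
        (∀ i, IsDef L M (Y i) ∧ IsDef L M (Z i) ∧
          (∀ y ∈ Y i, ∀ j, y j ∈ D) ∧ (∀ z ∈ Z i, ∀ j, z j ∈ C)) ∧
        X = {w | ∃ i, (w ∘ Sum.inl) ∈ Y i ∧ (w ∘ Sum.inr) ∈ Z i})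
    -- `D` weakly eliminates imaginaries
    (hDwei : ∀ (m : ℕ) (X : Set (Fin m → M)), IsDef L M X → (∀ x ∈ X, ∀ i, x i ∈ D) →
      WeakCoded L M X D)
    -- `C` weakly eliminates imaginaries
    (hCwei : ∀ (m : ℕ) (X : Set (Fin m → M)), IsDef L M X → (∀ x ∈ X, ∀ i, x i ∈ C) →
      WeakCoded L M X C) :
    ∀ (m n : ℕ) (X : Set ((Fin m ⊕ Fin n) → M)), IsDef L M X →
      (∀ w ∈ X, (∀ i, w (Sum.inl i) ∈ D) ∧ (∀ j, w (Sum.inr j) ∈ C)) →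
      WeakCoded L M X (D ∪ C) := by
  intro m n X hX hXDC
  obtain ⟨N, Y, Z, -, hXYZ⟩ := horth m n X hX hXDC
  have hfin := finite_range_fiber hXYZ
  rw [weakCoded_iff_defOver]
  refine defOver_of_fibers hfin fun z ⟨y, hy⟩ => ⟨?_, ?_⟩
  · have hfiberD : WeakCoded L M (fiber X z) D :=
      hDwei m _ (isDef_fiber hX z) fun y' hy' => (hXDC _ hy').1
    exact (weakCoded_iff_defOver.1 hfiberD).mono <|
      Set.inter_subset_inter Set.subset_union_left (aclCode_fiber_subset hfin z)
  · have hclassC : WeakCoded L M (fiberClass X (fiber X z)) C :=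
      hCwei n _ (isDef_fiberClass hX (isDef_fiber hX z)) fun z' hz' =>
        (hXDC _ (show y ∈ fiber X z' from hz' ▸ hy)).2
    exact (weakCoded_iff_defOver.1 hclassC).mono <|
      Set.inter_subset_inter Set.subset_union_right (aclCode_fiberClass_fiber_subset hfin z)

end WeakEIOrth
end
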